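/- arXiv:1010.5624 — 10 statements merged into one kernel-verified Lean document; each statement's English description precedes it below -/
import Mathlib

section
/- If a connected simple graph G satisfies χ_lid(G) ≤ 3, then G is either a triangle (the complete graph on three vertices) or a bipartite graph. -/
open SimpleGraph

/-- The closed neighborhood `N[v]` of a vertex `v` in a simple graph `G`. -/
def closedNbhd {V : Type*} (G : SimpleGraph V) (v : V) : Set V :=
  insert v (G.neighborSet v)

/-- A locally identifying coloring (lid-coloring): a proper vertex-coloring such that any
two adjacent vertices with distinct closed neighborhoods receive distinct sets of colors
on their closed neighborhoods. -/
def IsLidColoring {V α : Type*} (G : SimpleGraph V) (c : V → α) : Prop :=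
  (∀ ⦃u v : V⦄, G.Adj u v → c u ≠ c v) ∧
  (∀ ⦃u v : V⦄, G.Adj u v → closedNbhd G u ≠ closedNbhd G v →
    c '' closedNbhd G u ≠ c '' closedNbhd G v)

/-- `G` is `k`-lid-colorable: it admits a lid-coloring using at most `k` colors. -/
def LidColorable {V : Type*} (G : SimpleGraph V) (k : ℕ) : Prop :=
  ∃ c : V → Fin k, IsLidColoring G c

/-- `G` is bipartite: its vertex set splits into two parts such that every edge
joins the two parts. -/
def IsBipartite {V : Type*} (G : SimpleGraph V) : Prop :=
  ∃ U : Set V, ∀ ⦃u v : V⦄, G.Adj u v → (u ∈ U ↔ v ∉ U)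

lemma fin3_cover : ∀ a b c d : Fin 3, a ≠ b → a ≠ c → b ≠ c →
    d = a ∨ d = b ∨ d = c := by decide

lemma mem_closedNbhd_iff {V : Type*} (G : SimpleGraph V) (v x : V) :
    x ∈ closedNbhd G v ↔ x = v ∨ G.Adj v x := by
  simp [closedNbhd]

lemma self_mem_closedNbhd {V : Type*} (G : SimpleGraph V) (v : V) :
    v ∈ closedNbhd G v := Set.mem_insert _ _

lemma adj_mem_closedNbhd {V : Type*} {G : SimpleGraph V} {v x : V} (h : G.Adj v x) :
    x ∈ closedNbhd G v := (mem_closedNbhd_iff G v x).2 (Or.inr h)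

lemma reach_mem {V : Type*} {G : SimpleGraph V} {S : Set V}
    (hS : ∀ x ∈ S, ∀ y, G.Adj x y → y ∈ S) {u x : V}
    (h : G.Reachable u x) (hu : u ∈ S) : x ∈ S := by
  obtain ⟨w⟩ := h
  induction w with
  | nil => exact hu
  | cons hadj p ih => exact ih (hS _ hu _ hadj)

/-- If a connected simple graph `G` satisfies `χ_lid(G) ≤ 3`, then `G` is either a triangle
(the complete graph on three vertices) or a bipartite graph. -/
theorem stmt1 {V : Type*} [Fintype V] (G : SimpleGraph V) (hG : G.Connected)
    (h : LidColorable G 3) :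
    Nonempty (G ≃g completeGraph (Fin 3)) ∨ _root_.IsBipartite G := by
  obtain ⟨c, hprop, hlid⟩ := h
  by_cases htri : ∃ u v w : V, G.Adj u v ∧ G.Adj v w ∧ G.Adj u w
  · -- Triangle case: G is K3.
    obtain ⟨u, v, w, huv, hvw, huw⟩ := htri
    have hcuv : c u ≠ c v := hprop huv
    have hcvw : c v ≠ c w := hprop hvw
    have hcuw : c u ≠ c w := hprop huw
    -- each of u, v, w sees all three colors
    have hfull : ∀ z : V, u ∈ closedNbhd G z → v ∈ closedNbhd G z →
        w ∈ closedNbhd G z → c '' closedNbhd G z = Set.univ := by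
      intro z hu hv hw
      ext x
      simp only [Set.mem_univ, iff_true]
      rcases fin3_cover (c u) (c v) (c w) x hcuv hcuw hcvw with hx | hx | hx
      · exact ⟨u, hu, hx.symm⟩
      · exact ⟨v, hv, hx.symm⟩
      · exact ⟨w, hw, hx.symm⟩
    have hfu : c '' closedNbhd G u = Set.univ :=
      hfull u (self_mem_closedNbhd G u) (adj_mem_closedNbhd huv) (adj_mem_closedNbhd huw)
    have hfv : c '' closedNbhd G v = Set.univ :=
      hfull v (adj_mem_closedNbhd huv.symm) (self_mem_closedNbhd G v) (adj_mem_closedNbhd hvw)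
    have hfw : c '' closedNbhd G w = Set.univ :=
      hfull w (adj_mem_closedNbhd huw.symm) (adj_mem_closedNbhd hvw.symm)
        (self_mem_closedNbhd G w)
    have hNuv : closedNbhd G u = closedNbhd G v := by
      by_contra hne
      exact hlid huv hne (hfu.trans hfv.symm)
    have hNuw : closedNbhd G u = closedNbhd G w := by
      by_contra hne
      exact hlid huw hne (hfu.trans hfw.symm)
    -- every vertex in N[u] is one of u, v, w
    have hsub : ∀ x ∈ closedNbhd G u, x = u ∨ x = v ∨ x = w := by
      intro x hx
      by_contra hcon
      push_neg at hcon
      obtain ⟨hxu, hxv, hxw⟩ := hcon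
      have hau : G.Adj u x := ((mem_closedNbhd_iff G u x).1 hx).resolve_left hxu
      have hav : G.Adj v x :=
        ((mem_closedNbhd_iff G v x).1 (hNuv ▸ hx)).resolve_left hxv
      have haw : G.Adj w x :=
        ((mem_closedNbhd_iff G w x).1 (hNuw ▸ hx)).resolve_left hxw
      rcases fin3_cover (c u) (c v) (c w) (c x) hcuv hcuw hcvw with hx' | hx' | hx'
      · exact hprop hau hx'.symm
      · exact hprop hav hx'.symm
      · exact hprop haw hx'.symm
    -- the set {u, v, w} is closed under adjacency
    have hclosed : ∀ x ∈ ({u, v, w} : Set V), ∀ y, G.Adj x y → y ∈ ({u, v, w} : Set V) := by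
      intro x hx y hxy
      have hyN : y ∈ closedNbhd G u := by
        rcases hx with rfl | rfl | rfl
        · exact adj_mem_closedNbhd hxy
        · exact hNuv ▸ adj_mem_closedNbhd hxy
        · exact hNuw ▸ adj_mem_closedNbhd hxy
      rcases hsub y hyN with h' | h' | h'
      · exact Or.inl h'
      · exact Or.inr (Or.inl h')
      · exact Or.inr (Or.inr h')
    have hall : ∀ x : V, x = u ∨ x = v ∨ x = w := by
      intro x
      have := reach_mem hclosed (hG u x) (Set.mem_insert _ _)
      simpa using this
    -- c is a bijection onto Fin 3
    have hinj : Function.Injective c := by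
      intro a b hab
      rcases hall a with rfl | rfl | rfl <;> rcases hall b with rfl | rfl | rfl <;>
        first
          | rfl
          | exact absurd hab (by assumption)
          | exact absurd hab.symm (by assumption)
    have hsurj : Function.Surjective c := by
      intro d
      rcases fin3_cover (c u) (c v) (c w) d hcuv hcuw hcvw with hd | hd | hd
      · exact ⟨u, hd.symm⟩
      · exact ⟨v, hd.symm⟩
      · exact ⟨w, hd.symm⟩
    -- any two distinct vertices are adjacent
    have hadjall : ∀ a b : V, a ≠ b → G.Adj a b := by
      intro a b hab
      rcases hall a with rfl | rfl | rfl <;> rcases hall b with rfl | rfl | rfl <;>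
        first
          | exact absurd rfl hab
          | assumption
          | exact (by assumption : G.Adj _ _).symm
    left
    refine ⟨⟨Equiv.ofBijective c ⟨hinj, hsurj⟩, ?_⟩⟩
    intro a b
    simp only [Equiv.ofBijective_apply, completeGraph, top_adj]
    constructor
    · intro hne
      exact hadjall a b (fun hab => hne (hab ▸ rfl))
    · intro hab
      exact hprop hab
  · push_neg at htri
    right
    by_cases heq : ∃ u v : V, G.Adj u v ∧ closedNbhd G u = closedNbhd G v
    · -- equal closed neighborhoods on an edge, no triangle: G = K2
      obtain ⟨u, v, huv, hN⟩ := heq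
      have hsub : ∀ x ∈ closedNbhd G u, x = u ∨ x = v := by
        intro x hx
        by_contra hcon
        push_neg at hcon
        obtain ⟨hxu, hxv⟩ := hcon
        have hau : G.Adj u x := ((mem_closedNbhd_iff G u x).1 hx).resolve_left hxu
        have hav : G.Adj v x :=
          ((mem_closedNbhd_iff G v x).1 (hN ▸ hx)).resolve_left hxv
        exact htri u v x huv hav hau
      have hclosed : ∀ x ∈ ({u, v} : Set V), ∀ y, G.Adj x y → y ∈ ({u, v} : Set V) := by
        intro x hx y hxy
        have hyN : y ∈ closedNbhd G u := by
          rcases hx with rfl | rfl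
          · exact adj_mem_closedNbhd hxy
          · exact hN ▸ adj_mem_closedNbhd hxy
        exact hsub y hyN
      have hall : ∀ x : V, x = u ∨ x = v := by
        intro x
        have := reach_mem hclosed (hG u x) (Set.mem_insert _ _)
        simpa using this
      refine ⟨{u}, ?_⟩
      intro a b hab
      rcases hall a with rfl | rfl <;> rcases hall b with rfl | rfl
      · exact absurd rfl hab.ne
      · simp [hab.ne']
      · simp [hab.ne]
      · exact absurd rfl hab.ne
    · -- bipartition by "full" vertices
      push_neg at heq
      refine ⟨{v | c '' closedNbhd G v = Set.univ}, ?_⟩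
      intro u v huv
      have hNne : closedNbhd G u ≠ closedNbhd G v := heq u v huv
      have himg : c '' closedNbhd G u ≠ c '' closedNbhd G v := hlid huv hNne
      have hcuv : c u ≠ c v := hprop huv
      have himg2 : ∀ z1 z2 : V, G.Adj z1 z2 →
          ¬ c '' closedNbhd G z1 = Set.univ →
          c '' closedNbhd G z1 = {c z1, c z2} := by
        intro z1 z2 hz hnf
        obtain ⟨k, hk⟩ := Set.ne_univ_iff_exists_notMem _ |>.1 hnf
        have hk1 : c z1 ≠ k := fun hh =>
          hk ⟨z1, self_mem_closedNbhd G z1, hh⟩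
        have hk2 : c z2 ≠ k := fun hh =>
          hk ⟨z2, adj_mem_closedNbhd hz, hh⟩
        apply Set.Subset.antisymm
        · rintro x ⟨a, ha, rfl⟩
          rcases fin3_cover (c z1) (c z2) k (c a) (hprop hz) hk1 hk2 with h' | h' | h'
          · exact Or.inl h'
          · exact Or.inr h'
          · exact absurd ⟨a, ha, h'⟩ hk
        · rintro x (rfl | rfl)
          · exact ⟨z1, self_mem_closedNbhd G z1, rfl⟩
          · exact ⟨z2, adj_mem_closedNbhd hz, rfl⟩
      constructor
      · intro hu hv
        exact himg (hu.trans hv.symm)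
      · intro hv
        by_contra hu
        have h1 : c '' closedNbhd G u = {c u, c v} := himg2 u v huv hu
        have h2 : c '' closedNbhd G v = {c v, c u} := himg2 v u huv.symm hv
        apply himg
        rw [h1, h2, Set.pair_comm]
end

section
/- Let G be a connected bipartite graph on at least three vertices with bipartition {U, V}, and let c be a lid-coloring of G using the three colors 1, 2, 3. Then G has a vertex u with c(N[u]) = {1,2,3}, and moreover if u ∈ U, then every vertex of U has color c(u) and the set of colors appearing on V is exactly {1,2,3} \ {c(u)}. -/
open SimpleGraph

private lemma lid_walk_ind {V : Type*} {G : SimpleGraph V} (P : V → Prop)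
    (step : ∀ ⦃w x⦄, G.Adj w x → P w → P x) {u v : V} (p : G.Walk u v) (hu : P u) : P v := by
  induction p with
  | nil => exact hu
  | cons h q ih => exact ih (step h hu)

/-- In a connected bipartite graph on at least three vertices with bipartition `{A, Aᶜ}`,
any lid-coloring `c` with three colors has a vertex `u` whose closed neighborhood sees all
three colors; moreover, if `u ∈ A`, then every vertex of `A` has color `c u` and the colors
appearing on `Aᶜ` are exactly the two other colors. -/
theorem stmt2 {V : Type*} [Fintype V] (G : SimpleGraph V) (hG : G.Connected)
    (A : Set V) (hbip : ∀ ⦃u v : V⦄, G.Adj u v → (u ∈ A ↔ v ∉ A))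
    (hcard : 3 ≤ Fintype.card V)
    (c : V → Fin 3) (hc : IsLidColoring G c) :
    ∃ u : V, c '' closedNbhd G u = Set.univ ∧
      (u ∈ A → (∀ w ∈ A, c w = c u) ∧ c '' Aᶜ = Set.univ \ {c u}) := by
  classical
  have mem_self : ∀ u : V, u ∈ closedNbhd G u := fun u => Set.mem_insert _ _
  have mem_adj : ∀ {u v : V}, G.Adj u v → v ∈ closedNbhd G u :=
    fun h => Set.mem_insert_of_mem _ h
  have exists_adj : ∀ u : V, ∃ v, G.Adj u v := by
    intro u
    obtain ⟨v, hv⟩ := Fintype.exists_ne_of_one_lt_card (by omega) u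
    obtain ⟨p⟩ := hG.preconnected u v
    cases p with
    | nil => exact absurd rfl hv
    | cons h q => exact ⟨_, h⟩
  -- adjacent vertices have distinct closed neighborhoods
  have hne : ∀ ⦃u v : V⦄, G.Adj u v → closedNbhd G u ≠ closedNbhd G v := by
    intro u v huv heq
    have hu1 : ∀ ⦃w⦄, G.Adj u w → w = v := by
      intro w hw
      have : w ∈ closedNbhd G v := heq ▸ mem_adj hw
      rcases this with h | h
      · exact h
      · exfalso
        have h1 := hbip huv
        have h2 := hbip (h : G.Adj v w)
        have h3 := hbip hw
        tauto
    have hv1 : ∀ ⦃w⦄, G.Adj v w → w = u := by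
      intro w hw
      have : w ∈ closedNbhd G u := heq ▸ mem_adj hw
      rcases this with h | h
      · exact h
      · exact absurd ((hu1 h) ▸ hw) (G.loopless.irrefl v)
    have hall : ∀ z : V, z = u ∨ z = v := by
      intro z
      obtain ⟨p⟩ := hG.preconnected u z
      refine lid_walk_ind (fun x => x = u ∨ x = v) ?_ p (Or.inl rfl)
      intro w x hwx hw
      rcases hw with rfl | rfl
      · exact Or.inr (hu1 hwx)
      · exact Or.inl (hv1 hwx)
    have hsub : (Finset.univ : Finset V) ⊆ {u, v} := by
      intro z _
      rcases hall z with rfl | rfl <;> simp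
    have hle := Finset.card_le_card hsub
    simp only [Finset.card_univ] at hle
    have : Fintype.card V ≤ 2 :=
      hle.trans ((Finset.card_insert_le _ _).trans (by simp))
    omega
  set F : V → Prop := fun u => c '' closedNbhd G u = Set.univ with hF
  -- each edge has exactly one full endpoint
  have key : ∀ ⦃u v : V⦄, G.Adj u v → (F u ↔ ¬ F v) := by
    intro u v huv
    have himg := hc.2 huv (hne huv)
    have hcne : c u ≠ c v := hc.1 huv
    have hu_in : c u ∈ c '' closedNbhd G u := Set.mem_image_of_mem _ (mem_self u)
    have hv_in : c v ∈ c '' closedNbhd G u := Set.mem_image_of_mem _ (mem_adj huv)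
    have hu_in' : c u ∈ c '' closedNbhd G v := Set.mem_image_of_mem _ (mem_adj huv.symm)
    have hv_in' : c v ∈ c '' closedNbhd G v := Set.mem_image_of_mem _ (mem_self v)
    constructor
    · intro hFu hFv
      exact himg (hFu.trans hFv.symm)
    · intro hFv
      by_contra hFu
      have pair : ∀ (S : Set (Fin 3)), c u ∈ S → c v ∈ S → S ≠ Set.univ →
          S = {c u, c v} := by
        intro S h1 h2 h3
        have hex : ∃ x, x ∉ S := by
          by_contra h
          push_neg at h
          exact h3 (Set.eq_univ_of_forall h)
        obtain ⟨x, hx⟩ := hex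
        ext y
        constructor
        · intro hy
          have hyx : y ≠ x := fun h => hx (h ▸ hy)
          have hxa : x ≠ c u := fun h => hx (h ▸ h1)
          have hxb : x ≠ c v := fun h => hx (h ▸ h2)
          have hfin : ∀ a b x y : Fin 3, a ≠ b → x ≠ a → x ≠ b → y ≠ x →
              y = a ∨ y = b := by decide
          rcases hfin (c u) (c v) x y hcne hxa hxb hyx with rfl | rfl <;> simp
        · intro hy
          rcases hy with rfl | rfl
          · exact h1
          · exact h2
      have e1 := pair _ hu_in hv_in hFu
      have e2 := pair _ hu_in' hv_in' hFv
      exact himg (e1.trans e2.symm)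
  -- neighbors of a non-full vertex share one color
  have nbr : ∀ ⦃v u w : V⦄, ¬ F v → G.Adj v u → G.Adj v w → c w = c u := by
    intro v u w hFv hvu hvw
    by_contra hwu
    apply hFv
    have h1 : c v ∈ c '' closedNbhd G v := Set.mem_image_of_mem _ (mem_self v)
    have h2 : c u ∈ c '' closedNbhd G v := Set.mem_image_of_mem _ (mem_adj hvu)
    have h3 : c w ∈ c '' closedNbhd G v := Set.mem_image_of_mem _ (mem_adj hvw)
    have hvu' : c v ≠ c u := hc.1 hvu
    have hvw' : c v ≠ c w := hc.1 hvw
    apply Set.eq_univ_of_forall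
    intro y
    have hfin : ∀ a b d y : Fin 3, a ≠ b → a ≠ d → b ≠ d →
        (y = a ∨ y = b ∨ y = d) := by decide
    rcases hfin (c v) (c u) (c w) y hvu' hvw' (fun h => hwu h.symm) with rfl | rfl | rfl
    · exact h1
    · exact h2
    · exact h3
  -- there is a full vertex
  obtain ⟨u₀, v₀, h₀⟩ : ∃ u v : V, G.Adj u v := by
    obtain ⟨x⟩ := hG.nonempty
    obtain ⟨y, hy⟩ := exists_adj x
    exact ⟨x, y, hy⟩
  obtain ⟨u, hu⟩ : ∃ u : V, F u := by
    by_cases h : F u₀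
    · exact ⟨u₀, h⟩
    · exact ⟨v₀, not_not.mp (fun hh => h ((key h₀).mpr hh))⟩
  refine ⟨u, hu, ?_⟩
  intro huA
  -- A coincides with the full set
  have hAF : ∀ w : V, w ∈ A ↔ F w := by
    intro w
    obtain ⟨p⟩ := hG.preconnected u w
    refine lid_walk_ind (fun x => (x ∈ A ↔ F x)) ?_ p (by tauto)
    intro w x hwx hw
    have h1 := hbip hwx
    have h2 := key hwx
    tauto
  -- color propagation
  have hP : ∀ w : V, (F w → c w = c u) ∧ (¬ F w → ∀ ⦃x⦄, G.Adj w x → c x = c u) := by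
    intro w
    obtain ⟨p⟩ := hG.preconnected u w
    refine lid_walk_ind
      (fun z => (F z → c z = c u) ∧ (¬ F z → ∀ ⦃x⦄, G.Adj z x → c x = c u)) ?_ p
      ⟨fun _ => rfl, fun hn => absurd hu hn⟩
    intro w x hwx hw
    by_cases hFx : F x
    · refine ⟨fun _ => ?_, fun hn => absurd hFx hn⟩
      have hFw : ¬ F w := fun h => (key hwx).mp h hFx
      exact hw.2 hFw hwx
    · refine ⟨fun h => absurd h hFx, fun _ => ?_⟩
      have hFw : F w := (key hwx).mpr hFx
      intro y hxy
      rw [nbr hFx hwx.symm hxy, hw.1 hFw]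
  constructor
  · intro w hw
    exact (hP w).1 ((hAF w).mp hw)
  · ext b
    simp only [Set.mem_image, Set.mem_compl_iff, Set.mem_diff, Set.mem_univ, true_and,
      Set.mem_singleton_iff]
    constructor
    · rintro ⟨w, hwA, rfl⟩
      have hFw : ¬ F w := fun h => hwA ((hAF w).mpr h)
      obtain ⟨y, hy⟩ := exists_adj w
      have h1 : c y = c u := (hP w).2 hFw hy
      have h2 : c w ≠ c y := hc.1 hy
      rw [h1] at h2
      exact h2
    · intro hb
      have hbmem : b ∈ c '' closedNbhd G u := by rw [hu]; trivial
      obtain ⟨z, hz, rfl⟩ := hbmem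
      rcases hz with rfl | hz
      · exact absurd rfl hb
      · exact ⟨z, fun hzA => ((hbip (hz : G.Adj u z)).mp huA) hzA, rfl⟩
end

section
/- A tree T with at least 3 vertices is 3-lid-colorable if and only if the distance between every two leaves of T is even. -/
set_option linter.unusedSectionVars false


open SimpleGraph

namespace LidAux

open SimpleGraph Walk

variable {V : Type*} [DecidableEq V] {T : SimpleGraph V}

lemma path_length_eq_dist (hT : T.IsTree) {r u : V} (p : T.Walk r u) (hp : p.IsPath) :
    p.length = T.dist r u := by
  refine le_antisymm ?_ (SimpleGraph.dist_le p)
  obtain ⟨w, hw⟩ := (hT.isConnected.preconnected r u).exists_walk_length_eq_dist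
  have huniq := hT.IsAcyclic.path_unique ⟨p, hp⟩ ⟨w.bypass, w.bypass_isPath⟩
  have : p = w.bypass := congrArg Subtype.val huniq
  rw [this, ← hw]
  exact w.length_bypass_le

lemma dist_step (hT : T.IsTree) {r u v : V} (huv : T.Adj u v) :
    T.dist r v = T.dist r u + 1 ∨ T.dist r u = T.dist r v + 1 := by
  obtain ⟨w, -⟩ := (hT.isConnected.preconnected r u).exists_walk_length_eq_dist
  set p := w.bypass with hpdef
  have hp : p.IsPath := w.bypass_isPath
  have hplen : p.length = T.dist r u := path_length_eq_dist hT p hp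
  by_cases hv : v ∈ p.support
  · right
    have ht : (p.takeUntil v hv).IsPath := hp.takeUntil hv
    have hd : (p.dropUntil v hv).IsPath := hp.dropUntil hv
    have hsingle : (Walk.cons huv.symm Walk.nil : T.Walk v u).IsPath := by
      simp [Walk.cons_isPath_iff, huv.ne']
    have := hT.IsAcyclic.path_unique ⟨p.dropUntil v hv, hd⟩ ⟨Walk.cons huv.symm Walk.nil, hsingle⟩
    have hdlen : (p.dropUntil v hv).length = 1 := by
      have : p.dropUntil v hv = Walk.cons huv.symm Walk.nil := congrArg Subtype.val this
      rw [this]; simp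
    have hsum : (p.takeUntil v hv).length + (p.dropUntil v hv).length = p.length := by
      rw [← Walk.length_append, Walk.take_spec]
    have htlen : (p.takeUntil v hv).length = T.dist r v := path_length_eq_dist hT _ ht
    omega
  · left
    have hq : (p.concat huv).IsPath := by
      rw [← Walk.isPath_reverse_iff, Walk.reverse_concat, Walk.cons_isPath_iff]
      refine ⟨hp.reverse, ?_⟩
      simpa [Walk.support_reverse] using hv
    have := path_length_eq_dist hT _ hq
    rw [Walk.length_concat] at this
    omega

lemma parent_unique (hT : T.IsTree) {r v w₁ w₂ : V} (h₁ : T.Adj v w₁) (h₂ : T.Adj v w₂)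
    (hd₁ : T.dist r w₁ + 1 = T.dist r v) (hd₂ : T.dist r w₂ + 1 = T.dist r v) :
    w₁ = w₂ := by
  obtain ⟨a, -⟩ := (hT.isConnected.preconnected r w₁).exists_walk_length_eq_dist
  obtain ⟨b, -⟩ := (hT.isConnected.preconnected r w₂).exists_walk_length_eq_dist
  set p₁ := a.bypass; set p₂ := b.bypass
  have hp₁ : p₁.IsPath := a.bypass_isPath
  have hp₂ : p₂.IsPath := b.bypass_isPath
  have hl₁ : p₁.length = T.dist r w₁ := path_length_eq_dist hT p₁ hp₁
  have hl₂ : p₂.length = T.dist r w₂ := path_length_eq_dist hT p₂ hp₂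
  have hv₁ : v ∉ p₁.support := by
    intro hmem
    have := SimpleGraph.dist_le (p₁.takeUntil v hmem)
    have := p₁.length_takeUntil_le hmem
    omega
  have hv₂ : v ∉ p₂.support := by
    intro hmem
    have := SimpleGraph.dist_le (p₂.takeUntil v hmem)
    have := p₂.length_takeUntil_le hmem
    omega
  have hq₁ : (p₁.concat h₁.symm).IsPath := by
    rw [← Walk.isPath_reverse_iff, Walk.reverse_concat, Walk.cons_isPath_iff]
    exact ⟨hp₁.reverse, by simpa [Walk.support_reverse] using hv₁⟩
  have hq₂ : (p₂.concat h₂.symm).IsPath := by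
    rw [← Walk.isPath_reverse_iff, Walk.reverse_concat, Walk.cons_isPath_iff]
    exact ⟨hp₂.reverse, by simpa [Walk.support_reverse] using hv₂⟩
  have huniq := hT.IsAcyclic.path_unique ⟨p₁.concat h₁.symm, hq₁⟩ ⟨p₂.concat h₂.symm, hq₂⟩
  have heq : p₁.concat h₁.symm = p₂.concat h₂.symm := congrArg Subtype.val huniq
  have := congrArg (fun w => (Walk.reverse w).getVert 1) heq
  simpa [Walk.reverse_concat, Walk.getVert_cons_succ, Walk.getVert_zero] using this

lemma exists_parent (hT : T.IsTree) {r v : V} (hv : v ≠ r) :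
    ∃ w, T.Adj v w ∧ T.dist r w + 1 = T.dist r v := by
  obtain ⟨a, -⟩ := (hT.isConnected.preconnected r v).exists_walk_length_eq_dist
  set p := a.bypass
  have hp : p.IsPath := a.bypass_isPath
  have hl : p.length = T.dist r v := path_length_eq_dist hT p hp
  obtain ⟨w, h, q, hq⟩ := (p.reverse).exists_eq_cons_of_ne hv
  refine ⟨w, h, ?_⟩
  have hqp : q.IsPath := by
    have : (Walk.cons h q).IsPath := by rw [← hq]; exact hp.reverse
    exact this.of_cons
  have := path_length_eq_dist hT q.reverse hqp.reverse
  have hlen : q.length + 1 = p.length := by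
    have := congrArg Walk.length hq
    simpa [Walk.length_reverse] using this.symm
  rw [Walk.length_reverse] at this
  omega


lemma exists_neighbor [Fintype V] (hT : T.IsTree) (hcard : 2 ≤ Fintype.card V) (v : V) :
    ∃ w, T.Adj v w := by
  obtain ⟨u, hu⟩ := Fintype.exists_ne_of_one_lt_card (by omega) v
  obtain ⟨p⟩ := hT.isConnected.preconnected v u
  obtain ⟨w, h, q, -⟩ := p.exists_eq_cons_of_ne (Ne.symm hu)
  exact ⟨w, h⟩

lemma exists_leaf [Fintype V] [DecidableRel T.Adj] (hT : T.IsTree) (hcard : 3 ≤ Fintype.card V) :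
    ∃ r, T.degree r = 1 := by
  by_contra h
  push_neg at h
  have hdeg : ∀ v : V, 2 ≤ T.degree v := by
    intro v
    have h1 : 0 < T.degree v := (T.degree_pos_iff_exists_adj v).mpr (exists_neighbor hT (by omega) v)
    have := h v
    omega
  have hsum : ∑ v, T.degree v = 2 * T.edgeFinset.card := T.sum_degrees_eq_twice_card_edges
  have hcardE : T.edgeFinset.card + 1 = Fintype.card V := hT.card_edgeFinset
  have hge : 2 * Fintype.card V ≤ ∑ v, T.degree v := by
    calc 2 * Fintype.card V = ∑ _v : V, 2 := by simp [mul_comm]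
    _ ≤ ∑ v, T.degree v := Finset.sum_le_sum fun v _ => hdeg v
  omega


lemma mem_closedNbhd_self (v : V) : v ∈ closedNbhd T v := Set.mem_insert v _

lemma mem_closedNbhd_of_adj {u v : V} (h : T.Adj u v) : v ∈ closedNbhd T u :=
  Set.mem_insert_iff.mpr (Or.inr h)

lemma closedNbhd_ne [Fintype V] (hT : T.IsTree) (hcard : 3 ≤ Fintype.card V)
    {u v : V} (huv : T.Adj u v) : closedNbhd T u ≠ closedNbhd T v := by
  intro heq
  have hNu : ∀ w, T.Adj u w → w = v := by
    intro w hw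
    by_contra hne
    have hwv : T.Adj v w := by
      have hmem : w ∈ closedNbhd T v := heq ▸ mem_closedNbhd_of_adj hw
      rcases Set.mem_insert_iff.mp hmem with h' | h'
      · exact absurd h' hne
      · exact h'
    have p₁ : (Walk.cons hw Walk.nil : T.Walk u w).IsPath := by
      simp [Walk.cons_isPath_iff, hw.ne]
    have p₂ : (Walk.cons huv (Walk.cons hwv Walk.nil) : T.Walk u w).IsPath := by
      simp [Walk.cons_isPath_iff, hwv.ne, hw.ne, huv.ne, Ne.symm hne]
    have hp := hT.IsAcyclic.path_unique ⟨_, p₁⟩ ⟨_, p₂⟩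
    have := congrArg (fun q : T.Path u w => q.1.length) hp
    simp at this
  have hNv : ∀ w, T.Adj v w → w = u := by
    intro w hw
    by_contra hne
    have hwu : T.Adj u w := by
      have hmem : w ∈ closedNbhd T u := heq ▸ mem_closedNbhd_of_adj hw
      rcases Set.mem_insert_iff.mp hmem with h' | h'
      · exact absurd h' hne
      · exact h'
    have p₁ : (Walk.cons hw Walk.nil : T.Walk v w).IsPath := by
      simp [Walk.cons_isPath_iff, hw.ne]
    have p₂ : (Walk.cons huv.symm (Walk.cons hwu Walk.nil) : T.Walk v w).IsPath := by
      simp [Walk.cons_isPath_iff, hwu.ne, hw.ne, huv.ne', Ne.symm hne]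
    have hp := hT.IsAcyclic.path_unique ⟨_, p₁⟩ ⟨_, p₂⟩
    have := congrArg (fun q : T.Path v w => q.1.length) hp
    simp at this
  obtain ⟨x, hxu, hxv⟩ : ∃ x : V, x ≠ u ∧ x ≠ v := by
    by_contra hx
    push_neg at hx
    have hsub : (Finset.univ : Finset V) ⊆ {u, v} := by
      intro x _
      rcases eq_or_ne x u with rfl | h
      · simp
      · simp [hx x h]
    have h1 := Finset.card_le_card hsub
    have h2 : ({u, v} : Finset V).card ≤ 2 := Finset.card_le_two
    rw [Finset.card_univ] at h1
    omega
  obtain ⟨p⟩ := hT.isConnected.preconnected u x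
  have key : ∀ (a b : V) (q : T.Walk a b), (a = u ∨ a = v) → (b = u ∨ b = v) := by
    intro a b q
    induction q with
    | nil => exact id
    | cons h q ih =>
      intro ha
      apply ih
      rcases ha with rfl | rfl
      · exact Or.inr (hNu _ h)
      · exact Or.inl (hNv _ h)
  rcases key u x p (Or.inl rfl) with rfl | rfl
  · exact hxu rfl
  · exact hxv rfl


lemma forward [Fintype V] [DecidableRel T.Adj] (hT : T.IsTree) (hcard : 3 ≤ Fintype.card V)
    {c : V → Fin 3} (hprop : ∀ ⦃a b : V⦄, T.Adj a b → c a ≠ c b)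
    (hlid : ∀ ⦃a b : V⦄, T.Adj a b → closedNbhd T a ≠ closedNbhd T b →
      c '' closedNbhd T a ≠ c '' closedNbhd T b)
    {u v : V} (hu : T.degree u = 1) (hv : T.degree v = 1) : Even (T.dist u v) := by
  set S : V → Set (Fin 3) := fun x => c '' closedNbhd T x with hS
  have hcover : ∀ a b z y : Fin 3, a ≠ b → z ≠ a → z ≠ b → (y = a ∨ y = b ∨ y = z) := by decide
  have hthird : ∀ a b : Fin 3, ∃ z, z ≠ a ∧ z ≠ b := by decide
  have hpairForm : ∀ a b, ∀ _h : T.Adj a b, S a ≠ Set.univ → S a = {c a, c b} := by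
    intro a b h hna
    have hma : c a ∈ S a := ⟨a, mem_closedNbhd_self a, rfl⟩
    have hmb : c b ∈ S a := ⟨b, mem_closedNbhd_of_adj h, rfl⟩
    obtain ⟨z, hz⟩ : ∃ z, z ∉ S a := by
      by_contra hz
      push_neg at hz
      exact hna (Set.eq_univ_iff_forall.mpr hz)
    apply Set.Subset.antisymm
    · intro y hy
      rcases hcover (c a) (c b) z y (hprop h) (fun e => hz (e ▸ hma)) (fun e => hz (e ▸ hmb)) with
        rfl | rfl | rfl
      · exact Set.mem_insert _ _
      · exact Set.mem_insert_iff.mpr (Or.inr rfl)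
      · exact absurd hy hz
    · rintro y (rfl | rfl)
      · exact hma
      · exact hmb
  have hflip : ∀ a b, T.Adj a b → ((S a = Set.univ) ↔ ¬ (S b = Set.univ)) := by
    intro a b h
    have hne : S a ≠ S b := hlid h (closedNbhd_ne hT hcard h)
    constructor
    · intro ha hb
      exact hne (ha.trans hb.symm)
    · intro hb
      by_contra ha
      have h1 := hpairForm a b h ha
      have h2 := hpairForm b a h.symm hb
      rw [h1, h2] at hne
      exact hne (Set.pair_comm (c a) (c b))
  have hleaf : ∀ a, T.degree a = 1 → S a ≠ Set.univ := by
    intro a ha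
    obtain ⟨w, hw⟩ := Finset.card_eq_one.mp (ha : (T.neighborFinset a).card = 1)
    have hadj : T.Adj a w := by
      rw [← mem_neighborFinset, hw]
      exact Finset.mem_singleton_self w
    have hset : T.neighborSet a = {w} := by
      have : ((T.neighborFinset a : Finset V) : Set V) = T.neighborSet a := by
        rw [neighborFinset_def, Set.coe_toFinset]
      rw [← this, hw, Finset.coe_singleton]
    have hSa : S a = {c a, c w} := by
      show c '' closedNbhd T a = _
      unfold closedNbhd
      rw [hset, Set.image_insert_eq, Set.image_singleton]
    obtain ⟨z, hz1, hz2⟩ := hthird (c a) (c w)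
    intro hU
    have hzmem : z ∈ S a := hU ▸ Set.mem_univ z
    rw [hSa] at hzmem
    rcases hzmem with rfl | rfl
    · exact hz1 rfl
    · exact hz2 rfl
  have hwalk : ∀ (a b : V) (p : T.Walk a b), ((S a = Set.univ) ↔ (S b = Set.univ)) ↔
      Even p.length := by
    intro a b p
    induction p with
    | nil => simp
    | cons h q ih =>
      rw [Walk.length_cons, Nat.even_add_one, ← ih]
      have hf := hflip _ _ h
      tauto
  obtain ⟨p, hp⟩ := hT.isConnected.exists_walk_length_eq_dist u v
  have h1 := hleaf u hu
  have h2 := hleaf v hv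
  have := (hwalk u v p).mp (by tauto)
  rwa [hp] at this


lemma construction [Fintype V] [DecidableRel T.Adj] (hT : T.IsTree) (hcard : 3 ≤ Fintype.card V)
    (heven : ∀ u v : V, T.degree u = 1 → T.degree v = 1 → Even (T.dist u v)) :
    ∃ c : V → Fin 3, (∀ ⦃a b : V⦄, T.Adj a b → c a ≠ c b) ∧
      (∀ ⦃a b : V⦄, T.Adj a b → c '' closedNbhd T a ≠ c '' closedNbhd T b) := by
  obtain ⟨r, hr⟩ := exists_leaf hT hcard
  set c : V → Fin 3 :=
    fun v => if T.dist r v % 2 = 1 then 2 else if T.dist r v % 4 = 0 then 0 else 1 with hc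
  have codd : ∀ v, T.dist r v % 2 = 1 → c v = 2 := by
    intro v h
    simp only [hc]
    rw [if_pos h]
  have cev0 : ∀ v, T.dist r v % 2 = 0 → T.dist r v % 4 = 0 → c v = 0 := by
    intro v h2 h4
    simp only [hc]
    rw [if_neg (by omega), if_pos h4]
  have cev1 : ∀ v, T.dist r v % 2 = 0 → T.dist r v % 4 ≠ 0 → c v = 1 := by
    intro v h2 h4
    simp only [hc]
    rw [if_neg (by omega), if_neg h4]
  have hpar : ∀ a b : V, T.Adj a b → T.dist r a % 2 ≠ T.dist r b % 2 := by
    intro a b h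
    rcases dist_step hT (r := r) h with h' | h' <;> omega
  have hfull : ∀ v, T.dist r v % 2 = 1 → c '' closedNbhd T v = Set.univ := by
    intro v hodd
    have hvr : v ≠ r := by
      intro hvr
      rw [hvr, SimpleGraph.dist_self] at hodd
      omega
    obtain ⟨w, hw, hwd⟩ := exists_parent hT hvr
    have hdeg1 : T.degree v ≠ 1 := by
      intro h1
      have := heven r v hr h1
      rw [Nat.even_iff] at this
      omega
    have hpos : 0 < T.degree v := (T.degree_pos_iff_exists_adj v).mpr ⟨w, hw⟩
    have h2 : 1 < (T.neighborFinset v).card := by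
      have hdd : T.degree v = (T.neighborFinset v).card := rfl
      omega
    obtain ⟨a, ha, b, hb, hab⟩ := Finset.one_lt_card.mp h2
    rw [mem_neighborFinset] at ha hb
    obtain ⟨x, hx, hxd⟩ : ∃ x, T.Adj v x ∧ T.dist r x = T.dist r v + 1 := by
      rcases dist_step hT (r := r) ha with h' | h'
      · exact ⟨a, ha, h'⟩
      · rcases dist_step hT (r := r) hb with h'' | h''
        · exact ⟨b, hb, h''⟩
        · exact absurd (parent_unique hT (r := r) ha hb (by omega) (by omega)) hab
    have hcases : (T.dist r w % 2 = 0 ∧ T.dist r w % 4 = 0 ∧ T.dist r x % 2 = 0 ∧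
        T.dist r x % 4 ≠ 0) ∨ (T.dist r w % 2 = 0 ∧ T.dist r w % 4 ≠ 0 ∧
        T.dist r x % 2 = 0 ∧ T.dist r x % 4 = 0) := by omega
    have hy3 : ∀ y : Fin 3, y = 0 ∨ y = 1 ∨ y = 2 := by decide
    apply Set.eq_univ_iff_forall.mpr
    intro y
    rcases hy3 y with rfl | rfl | rfl
    · rcases hcases with ⟨e1, e2, _, _⟩ | ⟨_, _, e3, e4⟩
      · exact ⟨w, mem_closedNbhd_of_adj hw, cev0 w e1 e2⟩
      · exact ⟨x, mem_closedNbhd_of_adj hx, cev0 x e3 e4⟩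
    · rcases hcases with ⟨_, _, e3, e4⟩ | ⟨e1, e2, _, _⟩
      · exact ⟨x, mem_closedNbhd_of_adj hx, cev1 x e3 e4⟩
      · exact ⟨w, mem_closedNbhd_of_adj hw, cev1 w e1 e2⟩
    · exact ⟨v, mem_closedNbhd_self v, codd v hodd⟩
  have hnotfull : ∀ u, T.dist r u % 2 = 0 → c '' closedNbhd T u ≠ Set.univ := by
    intro u hev hU
    have hz : (if T.dist r u % 4 = 0 then (1 : Fin 3) else 0) ∈ c '' closedNbhd T u := by
      rw [hU]
      exact Set.mem_univ _
    obtain ⟨x, hxmem, hcx⟩ := hz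
    rcases Set.mem_insert_iff.mp hxmem with rfl | hadj
    · by_cases h4 : T.dist r x % 4 = 0
      · rw [cev0 x hev h4, if_pos h4] at hcx
        exact absurd hcx (by decide)
      · rw [cev1 x hev h4, if_neg h4] at hcx
        exact absurd hcx (by decide)
    · have hxodd : T.dist r x % 2 = 1 := by
        have := hpar u x hadj
        omega
      rw [codd x hxodd] at hcx
      by_cases h4 : T.dist r u % 4 = 0
      · rw [if_pos h4] at hcx
        exact absurd hcx (by decide)
      · rw [if_neg h4] at hcx
        exact absurd hcx (by decide)
  refine ⟨c, ?_, ?_⟩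
  · intro a b h hceq
    have hp := hpar a b h
    rcases (by omega : T.dist r a % 2 = 1 ∧ T.dist r b % 2 = 0 ∨
        T.dist r a % 2 = 0 ∧ T.dist r b % 2 = 1) with ⟨h1, h0⟩ | ⟨h0, h1⟩
    · rw [codd a h1] at hceq
      by_cases h4 : T.dist r b % 4 = 0
      · rw [cev0 b h0 h4] at hceq
        exact absurd hceq (by decide)
      · rw [cev1 b h0 h4] at hceq
        exact absurd hceq (by decide)
    · rw [codd b h1] at hceq
      by_cases h4 : T.dist r a % 4 = 0
      · rw [cev0 a h0 h4] at hceq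
        exact absurd hceq (by decide)
      · rw [cev1 a h0 h4] at hceq
        exact absurd hceq (by decide)
  · intro a b h
    have hp := hpar a b h
    rcases (by omega : T.dist r a % 2 = 1 ∧ T.dist r b % 2 = 0 ∨
        T.dist r a % 2 = 0 ∧ T.dist r b % 2 = 1) with ⟨h1, h0⟩ | ⟨h0, h1⟩
    · rw [hfull a h1]
      exact fun e => hnotfull b h0 e.symm
    · exact fun e => hnotfull a h0 (e.trans (hfull b h1))

end LidAux

/-- A tree `T` with at least 3 vertices is 3-lid-colorable if and only if the distance
between every two leaves is even. -/
theorem stmt3 {V : Type*} [Fintype V] (T : SimpleGraph V) [DecidableRel T.Adj]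
    (hT : T.IsTree) (hcard : 3 ≤ Fintype.card V) :
    LidColorable T 3 ↔
      ∀ u v : V, T.degree u = 1 → T.degree v = 1 → Even (T.dist u v) := by
  classical
  constructor
  · rintro ⟨c, hprop, hlid⟩ u v hu hv
    exact LidAux.forward hT hcard hprop hlid hu hv
  · intro heven
    obtain ⟨c, h1, h2⟩ := LidAux.construction hT hcard heven
    exact ⟨c, h1, fun a b h _ => h2 h⟩
end

section
/- If G₁ and G₂ are bipartite simple graphs without isolated vertices, then the Cartesian product G₁ □ G₂ is 3-lid-colorable. -/
open SimpleGraph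

/-- If `G₁` and `G₂` are bipartite graphs without isolated vertices, then their Cartesian
(box) product is 3-lid-colorable. -/
theorem stmt4 {V₁ V₂ : Type*} [Fintype V₁] [Fintype V₂]
    (G₁ : SimpleGraph V₁) (G₂ : SimpleGraph V₂)
    (h₁ : _root_.IsBipartite G₁) (h₂ : _root_.IsBipartite G₂)
    (hi₁ : ∀ v : V₁, ∃ w, G₁.Adj v w) (hi₂ : ∀ v : V₂, ∃ w, G₂.Adj v w) :
    LidColorable (G₁ □ G₂) 3 := by
  classical
  obtain ⟨U₁, hU₁⟩ := h₁
  obtain ⟨U₂, hU₂⟩ := h₂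
  set c : V₁ × V₂ → Fin 3 := fun p =>
    if p.1 ∈ U₁ then (if p.2 ∈ U₂ then 2 else 1) else (if p.2 ∈ U₂ then 1 else 0) with hc
  have memN : ∀ (x w : V₁ × V₂),
      w ∈ closedNbhd (G₁ □ G₂) x ↔ w = x ∨ (G₁ □ G₂).Adj x w := by
    intro x w
    simp [closedNbhd, SimpleGraph.mem_neighborSet]
  -- pure vertices of type (1,1) don't see color 0
  have notmem0 : ∀ x : V₁ × V₂, x.1 ∈ U₁ → x.2 ∈ U₂ →
      (0 : Fin 3) ∉ c '' closedNbhd (G₁ □ G₂) x := by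
    rintro x h1 h2 ⟨w, hw, hcw⟩
    rcases (memN x w).mp hw with rfl | hadj
    · simp [hc, h1, h2] at hcw
    · rcases SimpleGraph.boxProd_adj.mp hadj with ⟨h, he⟩ | ⟨h, he⟩
      · have hw1 : w.1 ∉ U₁ := (hU₁ h).mp h1
        have hw2 : w.2 ∈ U₂ := he ▸ h2
        simp [hc, hw1, hw2] at hcw
      · have hw1 : w.1 ∈ U₁ := he ▸ h1
        have hw2 : w.2 ∉ U₂ := (hU₂ h).mp h2
        simp [hc, hw1, hw2] at hcw
  -- pure vertices of type (0,0) don't see color 2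
  have notmem2 : ∀ x : V₁ × V₂, x.1 ∉ U₁ → x.2 ∉ U₂ →
      (2 : Fin 3) ∉ c '' closedNbhd (G₁ □ G₂) x := by
    rintro x h1 h2 ⟨w, hw, hcw⟩
    rcases (memN x w).mp hw with rfl | hadj
    · simp [hc, h1, h2] at hcw
    · rcases SimpleGraph.boxProd_adj.mp hadj with ⟨h, he⟩ | ⟨h, he⟩
      · have hw1 : w.1 ∈ U₁ := by
          by_contra hw'
          exact h1 ((hU₁ h).mpr hw')
        have hw2 : w.2 ∉ U₂ := he ▸ h2
        simp [hc, hw1, hw2] at hcw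
      · have hw1 : w.1 ∉ U₁ := he ▸ h1
        have hw2 : w.2 ∈ U₂ := by
          by_contra hw'
          exact h2 ((hU₂ h).mpr hw')
        simp [hc, hw1, hw2] at hcw
  -- mixed vertices of type (1,0) see colors 0 and 2
  have memC : ∀ x : V₁ × V₂, x.1 ∈ U₁ → x.2 ∉ U₂ →
      (0 : Fin 3) ∈ c '' closedNbhd (G₁ □ G₂) x ∧
      (2 : Fin 3) ∈ c '' closedNbhd (G₁ □ G₂) x := by
    intro x h1 h2
    obtain ⟨w1, hw1⟩ := hi₁ x.1
    obtain ⟨w2, hw2⟩ := hi₂ x.2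
    constructor
    · refine ⟨(w1, x.2), (memN x _).mpr (Or.inr (SimpleGraph.boxProd_adj.mpr
        (Or.inl ⟨hw1, rfl⟩))), ?_⟩
      have hnw1 : w1 ∉ U₁ := (hU₁ hw1).mp h1
      simp [hc, hnw1, h2]
    · refine ⟨(x.1, w2), (memN x _).mpr (Or.inr (SimpleGraph.boxProd_adj.mpr
        (Or.inr ⟨hw2, rfl⟩))), ?_⟩
      have hnw2 : w2 ∈ U₂ := by
        by_contra hw'
        exact h2 ((hU₂ hw2).mpr hw')
      simp [hc, h1, hnw2]
  -- mixed vertices of type (0,1) see colors 0 and 2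
  have memD : ∀ x : V₁ × V₂, x.1 ∉ U₁ → x.2 ∈ U₂ →
      (0 : Fin 3) ∈ c '' closedNbhd (G₁ □ G₂) x ∧
      (2 : Fin 3) ∈ c '' closedNbhd (G₁ □ G₂) x := by
    intro x h1 h2
    obtain ⟨w1, hw1⟩ := hi₁ x.1
    obtain ⟨w2, hw2⟩ := hi₂ x.2
    constructor
    · refine ⟨(x.1, w2), (memN x _).mpr (Or.inr (SimpleGraph.boxProd_adj.mpr
        (Or.inr ⟨hw2, rfl⟩))), ?_⟩
      have hnw2 : w2 ∉ U₂ := (hU₂ hw2).mp h2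
      simp [hc, h1, hnw2]
    · refine ⟨(w1, x.2), (memN x _).mpr (Or.inr (SimpleGraph.boxProd_adj.mpr
        (Or.inl ⟨hw1, rfl⟩))), ?_⟩
      have hnw1 : w1 ∈ U₁ := by
        by_contra hw'
        exact h1 ((hU₁ hw1).mpr hw')
      simp [hc, hnw1, h2]
  refine ⟨c, ?_, ?_⟩
  · -- proper coloring
    intro u v hadj
    rcases SimpleGraph.boxProd_adj.mp hadj with ⟨h, he⟩ | ⟨h, he⟩
    · by_cases h1 : u.1 ∈ U₁ <;> by_cases h2 : u.2 ∈ U₂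
      · have hv1 : v.1 ∉ U₁ := (hU₁ h).mp h1
        have hv2 : v.2 ∈ U₂ := he ▸ h2
        simp [hc, h1, h2, hv1, hv2]
      · have hv1 : v.1 ∉ U₁ := (hU₁ h).mp h1
        have hv2 : v.2 ∉ U₂ := he ▸ h2
        simp [hc, h1, h2, hv1, hv2]
      · have hv1 : v.1 ∈ U₁ := by
          by_contra hw'
          exact h1 ((hU₁ h).mpr hw')
        have hv2 : v.2 ∈ U₂ := he ▸ h2
        simp [hc, h1, h2, hv1, hv2]
      · have hv1 : v.1 ∈ U₁ := by
          by_contra hw'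
          exact h1 ((hU₁ h).mpr hw')
        have hv2 : v.2 ∉ U₂ := he ▸ h2
        simp [hc, h1, h2, hv1, hv2]
    · by_cases h1 : u.1 ∈ U₁ <;> by_cases h2 : u.2 ∈ U₂
      · have hv1 : v.1 ∈ U₁ := he ▸ h1
        have hv2 : v.2 ∉ U₂ := (hU₂ h).mp h2
        simp [hc, h1, h2, hv1, hv2]
      · have hv1 : v.1 ∈ U₁ := he ▸ h1
        have hv2 : v.2 ∈ U₂ := by
          by_contra hw'
          exact h2 ((hU₂ h).mpr hw')
        simp [hc, h1, h2, hv1, hv2]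
      · have hv1 : v.1 ∉ U₁ := he ▸ h1
        have hv2 : v.2 ∉ U₂ := (hU₂ h).mp h2
        simp [hc, h1, h2, hv1, hv2]
      · have hv1 : v.1 ∉ U₁ := he ▸ h1
        have hv2 : v.2 ∈ U₂ := by
          by_contra hw'
          exact h2 ((hU₂ h).mpr hw')
        simp [hc, h1, h2, hv1, hv2]
  · -- lid condition
    intro u v hadj _hne heq
    rcases SimpleGraph.boxProd_adj.mp hadj with ⟨h, he⟩ | ⟨h, he⟩
    · -- edge in the G₁ direction: second coords equal
      by_cases h1 : u.1 ∈ U₁ <;> by_cases h2 : u.2 ∈ U₂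
      · have hv1 : v.1 ∉ U₁ := (hU₁ h).mp h1
        have hv2 : v.2 ∈ U₂ := he ▸ h2
        exact notmem0 u h1 h2 (heq ▸ (memD v hv1 hv2).1)
      · have hv1 : v.1 ∉ U₁ := (hU₁ h).mp h1
        have hv2 : v.2 ∉ U₂ := he ▸ h2
        exact notmem2 v hv1 hv2 (heq ▸ (memC u h1 h2).2)
      · have hv1 : v.1 ∈ U₁ := by
          by_contra hw'
          exact h1 ((hU₁ h).mpr hw')
        have hv2 : v.2 ∈ U₂ := he ▸ h2
        exact notmem0 v hv1 hv2 (heq ▸ (memD u h1 h2).1)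
      · have hv1 : v.1 ∈ U₁ := by
          by_contra hw'
          exact h1 ((hU₁ h).mpr hw')
        have hv2 : v.2 ∉ U₂ := he ▸ h2
        exact notmem2 u h1 h2 (heq ▸ (memC v hv1 hv2).2)
    · -- edge in the G₂ direction: first coords equal
      by_cases h1 : u.1 ∈ U₁ <;> by_cases h2 : u.2 ∈ U₂
      · have hv1 : v.1 ∈ U₁ := he ▸ h1
        have hv2 : v.2 ∉ U₂ := (hU₂ h).mp h2
        exact notmem0 u h1 h2 (heq ▸ (memC v hv1 hv2).1)
      · have hv1 : v.1 ∈ U₁ := he ▸ h1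
        have hv2 : v.2 ∈ U₂ := by
          by_contra hw'
          exact h2 ((hU₂ h).mpr hw')
        exact notmem0 v hv1 hv2 (heq ▸ (memC u h1 h2).1)
      · have hv1 : v.1 ∉ U₁ := he ▸ h1
        have hv2 : v.2 ∉ U₂ := (hU₂ h).mp h2
        exact notmem2 v hv1 hv2 (heq ▸ (memD u h1 h2).2)
      · have hv1 : v.1 ∉ U₁ := he ▸ h1
        have hv2 : v.2 ∈ U₂ := by
          by_contra hw'
          exact h2 ((hU₂ h).mpr hw')
        exact notmem2 u h1 h2 (heq ▸ (memD v hv1 hv2).2)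
end

section
/- Every bipartite simple graph G satisfies χ_lid(G) ≤ 4, i.e. G admits a lid-coloring using at most 4 colors. -/
open SimpleGraph

section aux
variable {V : Type*} (G : SimpleGraph V)

/-- `w` has exactly one neighbor. -/
def OneNbr (w : V) : Prop := ∃ x, ∀ y, G.Adj w y ↔ y = x

open Classical in
noncomputable def croot (C : G.ConnectedComponent) : V :=
  if h : ∃ w : V, G.connectedComponentMk w = C ∧ OneNbr G w then h.choose else C.out

lemma croot_mk (C : G.ConnectedComponent) : G.connectedComponentMk (croot G C) = C := by
  unfold croot
  split
  · next h => exact h.choose_spec.1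
  · exact C.out_eq

lemma croot_onenbr (C : G.ConnectedComponent) {w : V} (hw : G.connectedComponentMk w = C)
    (h1 : OneNbr G w) : OneNbr G (croot G C) := by
  unfold croot
  rw [dif_pos ⟨w, hw, h1⟩]
  exact (Exists.choose_spec (p := fun w => G.connectedComponentMk w = C ∧ OneNbr G w) _).2

/-- the root assigned to a vertex -/
noncomputable def vroot (v : V) : V := croot G (G.connectedComponentMk v)

lemma vroot_reach (v : V) : G.Reachable (vroot G v) v :=
  ConnectedComponent.exact (croot_mk G _)

lemma vroot_adj {u v : V} (h : G.Adj u v) : vroot G u = vroot G v := by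
  unfold vroot
  rw [ConnectedComponent.connectedComponentMk_eq_of_adj h]

/-- distance to the root -/
noncomputable def dd (v : V) : ℕ := G.dist (vroot G v) v

variable {G} {U : Set V} (hU : ∀ ⦃u v : V⦄, G.Adj u v → (u ∈ U ↔ v ∉ U))
include hU

lemma walk_parity {a b : V} (p : G.Walk a b) : ((a ∈ U) ↔ (b ∈ U)) ↔ Even p.length := by
  induction p with
  | nil => simp
  | @cons a w b h q ih =>
    have h1 := hU h
    rw [SimpleGraph.Walk.length_cons, Nat.even_add_one, ← ih]
    by_cases ha : a ∈ U <;> by_cases hw : w ∈ U <;> by_cases hb : b ∈ U <;> tauto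

lemma dd_parity (v : V) : ((vroot G v ∈ U) ↔ (v ∈ U)) ↔ Even (dd G v) := by
  obtain ⟨p, hp⟩ := (vroot_reach G v).exists_walk_length_eq_dist
  rw [dd, ← hp]
  exact walk_parity hU p

/-- adjacent vertices have distances-to-root differing by one -/
lemma dd_adj {u v : V} (h : G.Adj u v) : dd G v = dd G u + 1 ∨ dd G u = dd G v + 1 := by
  have hr : vroot G u = vroot G v := vroot_adj G h
  have h1 : dd G v ≤ dd G u + 1 := by
    have := SimpleGraph.Reachable.dist_anti (le_refl G)
      ((vroot_reach G u).trans h.reachable)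
    calc dd G v = G.dist (vroot G u) v := by rw [dd, hr]
    _ ≤ _ := by
        obtain ⟨p, hp⟩ := (vroot_reach G u).exists_walk_length_eq_dist
        have := SimpleGraph.dist_le (p.concat h)
        rwa [SimpleGraph.Walk.length_concat, hp] at this
  have h2 : dd G u ≤ dd G v + 1 := by
    calc dd G u = G.dist (vroot G v) u := by rw [dd, hr]
    _ ≤ _ := by
        obtain ⟨p, hp⟩ := (vroot_reach G v).exists_walk_length_eq_dist
        have := SimpleGraph.dist_le (p.concat h.symm)
        rwa [SimpleGraph.Walk.length_concat, hp] at this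
  have h3 : dd G u ≠ dd G v := by
    intro he
    have pu := dd_parity hU u
    have pv := dd_parity hU v
    rw [hr] at pu
    rw [← he] at pv
    have := hU h
    by_cases h4 : Even (dd G u) <;> tauto
  omega

omit hU

/-- a vertex at positive distance from the root has a neighbor one step closer -/
lemma dd_pred {u : V} {k : ℕ} (hk : dd G u = k + 1) :
    ∃ w, G.Adj u w ∧ dd G w = k := by
  obtain ⟨r, hr, hreach, hdist⟩ : ∃ r, vroot G u = r ∧ G.Reachable r u ∧ G.dist r u = k + 1 :=
    ⟨vroot G u, rfl, vroot_reach G u, hk⟩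
  obtain ⟨p, hp⟩ := hreach.symm.exists_walk_length_eq_dist
  rw [SimpleGraph.dist_comm, hdist] at hp
  cases p with
  | nil => simp at hp
  | @cons _ w _ ha q =>
    refine ⟨w, ha, ?_⟩
    have hlen : q.length = k := by
      simp [SimpleGraph.Walk.length_cons] at hp; omega
    have hwroot : vroot G w = r := by rw [← hr]; exact (vroot_adj G ha).symm
    have hddw : dd G w = G.dist r w := by simp only [dd, hwroot]
    have hle : G.dist r w ≤ k := by
      have := SimpleGraph.dist_le q.reverse
      rwa [SimpleGraph.Walk.length_reverse, hlen] at this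
    have hge : k ≤ G.dist r w := by
      obtain ⟨p2, hp2⟩ := (vroot_reach G w).exists_walk_length_eq_dist
      have h2 := SimpleGraph.dist_le (p2.concat ha.symm)
      rw [SimpleGraph.Walk.length_concat, hp2, hwroot, hdist] at h2
      omega
    omega

section key
variable {U : Set V} (hU : ∀ ⦃u v : V⦄, G.Adj u v → (u ∈ U ↔ v ∉ U))
include hU

lemma key {u v : V} (ha : G.Adj u v) (hd : dd G v = dd G u + 1)
    (hne : closedNbhd G u ≠ closedNbhd G v) :
    (fun x => dd G x % 4) '' closedNbhd G u ≠ (fun x => dd G x % 4) '' closedNbhd G v := by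
  set k := dd G u with hk
  -- facts about neighbors
  have hnbrV : ∀ y, G.Adj v y → dd G y = k + 2 ∨ dd G y = k := by
    intro y hy
    rcases dd_adj hU hy with h1 | h1 <;> omega
  have hnbrU : ∀ y, G.Adj u y → dd G y = k + 1 ∨ dd G y + 1 = k := by
    intro y hy
    rcases dd_adj hU hy with h1 | h1 <;> omega
  rcases Nat.eq_zero_or_pos k with hk0 | hkpos
  · -- k = 0 : u is the root
    have hur : vroot G u = u := by
      have : G.dist (vroot G u) u = 0 := hk0
      exact ((vroot_reach G u).dist_eq_zero_iff).mp this
    by_cases h2 : ∃ y, G.Adj v y ∧ dd G y = k + 2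
    · obtain ⟨y, hy, hdy⟩ := h2
      intro heq
      have hmem : (k + 2) % 4 ∈ (fun x => dd G x % 4) '' closedNbhd G v :=
        ⟨y, Or.inr hy, by show dd G y % 4 = (k + 2) % 4; rw [hdy]⟩
      rw [← heq] at hmem
      obtain ⟨x, hx, hfx⟩ := hmem
      rcases hx with rfl | hx
      · simp only at hfx; omega
      · rcases hnbrU x hx with h3 | h3 <;> simp only at hfx <;> omega
    · -- all neighbors of v are the root u, so v is pendant and so is the root
      push_neg at h2
      have hvnbr : ∀ y, G.Adj v y → y = u := by
        intro y hy
        rcases hnbrV y hy with h3 | h3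
        · exact absurd h3 (h2 y hy)
        · have hry : vroot G y = vroot G u := by
            rw [vroot_adj G hy.symm, vroot_adj G ha]
          have : G.dist (vroot G y) y = 0 := by rw [← hk0]; exact h3
          have := ((vroot_reach G y).dist_eq_zero_iff).mp this
          rw [← this, hry, hur]
      have hvone : OneNbr G v := ⟨u, fun y => ⟨hvnbr y, fun hy => hy ▸ ha.symm⟩⟩
      have huone : OneNbr G (vroot G v) :=
        croot_onenbr G (G.connectedComponentMk v) rfl hvone
      rw [← vroot_adj G ha, hur] at huone
      obtain ⟨x0, hx0⟩ := huone
      have hx0v : x0 = v := ((hx0 v).mp ha).symm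
      exfalso
      apply hne
      have h4 : closedNbhd G u = {u, v} := by
        ext y
        simp only [closedNbhd, Set.mem_insert_iff, mem_neighborSet, hx0, hx0v,
          Set.mem_singleton_iff]
      have h5 : closedNbhd G v = {v, u} := by
        ext y
        simp only [closedNbhd, Set.mem_insert_iff, mem_neighborSet, Set.mem_singleton_iff]
        constructor
        · rintro (rfl | hy)
          · exact Or.inl rfl
          · exact Or.inr (hvnbr y hy)
        · rintro (rfl | rfl)
          · exact Or.inl rfl
          · exact Or.inr ha.symm
      rw [h4, h5, Set.pair_comm]
  · -- k ≥ 1 : u has a neighbor at distance k - 1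
    obtain ⟨w, hw, hdw⟩ := dd_pred (show dd G u = (k - 1) + 1 by omega)
    intro heq
    have hmem : (k - 1) % 4 ∈ (fun x => dd G x % 4) '' closedNbhd G u :=
      ⟨w, Or.inr hw, by show dd G w % 4 = (k - 1) % 4; rw [hdw]⟩
    rw [heq] at hmem
    obtain ⟨x, hx, hfx⟩ := hmem
    rcases hx with rfl | hx
    · simp only at hfx; omega
    · rcases hnbrV x hx with h3 | h3 <;> simp only at hfx <;> omega

end key
end aux

/-- Every bipartite graph admits a lid-coloring using at most 4 colors. -/
theorem stmt5 {V : Type*} [Fintype V] (G : SimpleGraph V) (h : _root_.IsBipartite G) :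
    LidColorable G 4 := by
  obtain ⟨U, hU⟩ := h
  refine ⟨fun v => ⟨dd G v % 4, Nat.mod_lt _ (by norm_num)⟩, ?_, ?_⟩
  · intro u v ha he
    have h1 : dd G u % 4 = dd G v % 4 := congrArg Fin.val he
    rcases dd_adj hU ha with h2 | h2 <;> omega
  · intro u v ha hne heq
    have hval : ∀ s : Set V, (fun x => dd G x % 4) '' s =
        Fin.val '' ((fun v => (⟨dd G v % 4, Nat.mod_lt _ (by norm_num)⟩ : Fin 4)) '' s) :=
      fun s => by rw [Set.image_image]
    have heq' : (fun x => dd G x % 4) '' closedNbhd G u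
        = (fun x => dd G x % 4) '' closedNbhd G v := by
      rw [hval, hval, heq]
    rcases dd_adj hU ha with h2 | h2
    · exact key hU ha h2 hne heq'
    · exact key hU ha.symm h2 hne.symm heq'.symm
end

section
/- If G is a k-tree, then χ_lid(G) ≤ 2k + 2, i.e. G admits a lid-coloring using at most 2k+2 colors. -/
open SimpleGraph

/-- `G` is a `k`-tree: its vertices can be ordered `v₀, v₁, …` so that the first `k+1`
vertices induce a clique and, for every later vertex, its neighbors among the earlier
vertices induce a clique on `k` vertices. -/
def IsKTree {V : Type*} [Fintype V] (G : SimpleGraph V) (k : ℕ) : Prop :=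
  k + 1 ≤ Fintype.card V ∧
  ∃ e : Fin (Fintype.card V) ≃ V,
    (∀ i j : Fin (Fintype.card V), i.val < k + 1 → j.val < k + 1 → i ≠ j →
      G.Adj (e i) (e j)) ∧
    (∀ i : Fin (Fintype.card V), k + 1 ≤ i.val →
      {j : Fin (Fintype.card V) | j < i ∧ G.Adj (e j) (e i)}.ncard = k ∧
      ∀ j₁ j₂ : Fin (Fintype.card V), j₁ < i → G.Adj (e j₁) (e i) →
        j₂ < i → G.Adj (e j₂) (e i) → j₁ ≠ j₂ → G.Adj (e j₁) (e j₂))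


open scoped Classical

section KTreeAux

variable {V : Type*} [Fintype V] (G : SimpleGraph V) (k : ℕ)
variable (e : Fin (Fintype.card V) ≃ V)

/-- existence of a common neighbor of the parent set of `i`. -/
def Zex (i : Fin (Fintype.card V)) : Prop :=
  ∃ z : Fin (Fintype.card V), z < i ∧
    ∀ j : Fin (Fintype.card V), j < i → G.Adj (e j) (e i) → G.Adj (e z) (e j)

noncomputable def pcolF (i : Fin (Fintype.card V))
    (prev : ∀ j : Fin (Fintype.card V), (Fin.val j) < (Fin.val i) → Fin (k + 1)) :
    Fin (k + 1) :=
  if h : i.val < k + 1 then ⟨i.val, h⟩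
  else if hq : ∃ q : Fin (k + 1), ∀ (j : Fin (Fintype.card V)) (hj : j < i),
      G.Adj (e j) (e i) → prev j hj ≠ q then hq.choose else 0

noncomputable def pcol : Fin (Fintype.card V) → Fin (k + 1) :=
  WellFounded.fix (measure (fun i : Fin (Fintype.card V) => i.val)).wf (pcolF G k e)

lemma pcol_eq (i : Fin (Fintype.card V)) :
    pcol G k e i = pcolF G k e i (fun j _ => pcol G k e j) :=
  WellFounded.fix_eq _ _ _

noncomputable def bcolF (i : Fin (Fintype.card V))
    (prev : ∀ j : Fin (Fintype.card V), (Fin.val j) < (Fin.val i) → Bool) : Bool :=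
  if i.val < k + 1 then false
  else if hz : Zex G e i then !(prev hz.choose hz.choose_spec.1) else false

noncomputable def bcol : Fin (Fintype.card V) → Bool :=
  WellFounded.fix (measure (fun i : Fin (Fintype.card V) => i.val)).wf (bcolF G k e)

lemma bcol_eq (i : Fin (Fintype.card V)) :
    bcol G k e i = bcolF G k e i (fun j _ => bcol G k e j) :=
  WellFounded.fix_eq _ _ _

lemma pcol_base (i : Fin (Fintype.card V)) (h : i.val < k + 1) :
    pcol G k e i = ⟨i.val, h⟩ := by
  rw [pcol_eq]; unfold pcolF; rw [dif_pos h]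

lemma bcol_base (i : Fin (Fintype.card V)) (h : i.val < k + 1) :
    bcol G k e i = false := by
  rw [bcol_eq]; unfold bcolF; rw [if_pos h]

lemma pcol_choice (i : Fin (Fintype.card V)) (h : ¬ i.val < k + 1)
    (hq : ∃ q : Fin (k + 1), ∀ (j : Fin (Fintype.card V)) (hj : j < i),
      G.Adj (e j) (e i) → pcol G k e j ≠ q) :
    ∀ (j : Fin (Fintype.card V)), j < i → G.Adj (e j) (e i) →
      pcol G k e j ≠ pcol G k e i := by
  intro j hj hadj
  have heq : pcol G k e i = hq.choose := by
    rw [pcol_eq]; unfold pcolF; rw [dif_neg h, dif_pos hq]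
  rw [heq]
  exact hq.choose_spec j hj hadj

lemma bcol_choice (i : Fin (Fintype.card V)) (h : ¬ i.val < k + 1) (hz : Zex G e i) :
    bcol G k e i = !(bcol G k e hz.choose) := by
  rw [bcol_eq]; unfold bcolF; rw [if_neg h, dif_pos hz]

end KTreeAux

section KTreeMain

variable {V : Type*} [Fintype V] (G : SimpleGraph V) (k : ℕ)
variable (e : Fin (Fintype.card V) ≃ V)

lemma pigeon_fin {n : ℕ} (F : Finset (Fin n)) (hF : F.card ≤ k)
    (f : Fin n → Fin (k + 1)) : ∃ q : Fin (k + 1), ∀ j ∈ F, f j ≠ q := by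
  by_contra hcon
  push_neg at hcon
  have hsub : (Finset.univ : Finset (Fin (k + 1))) ⊆ F.image f := by
    intro q _
    obtain ⟨j, hj, hfj⟩ := hcon q
    exact Finset.mem_image.mpr ⟨j, hj, hfj⟩
  have h1 := Finset.card_le_card hsub
  have h2 := Finset.card_image_le (s := F) (f := f)
  simp [Finset.card_univ] at h1
  omega

lemma Pfin
    (hc : ∀ i : Fin (Fintype.card V), k + 1 ≤ i.val →
      {j : Fin (Fintype.card V) | j < i ∧ G.Adj (e j) (e i)}.ncard = k)
    (i : Fin (Fintype.card V)) (hi : k + 1 ≤ i.val) :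
    (Finset.univ.filter (fun j => j < i ∧ G.Adj (e j) (e i))).card = k := by
  have h1 : {j : Fin (Fintype.card V) | j < i ∧ G.Adj (e j) (e i)} =
      ↑(Finset.univ.filter (fun j => j < i ∧ G.Adj (e j) (e i))) := by
    ext j; simp
  have h2 := hc i hi
  rw [h1, Set.ncard_coe_finset] at h2
  exact h2

lemma pex
    (hc : ∀ i : Fin (Fintype.card V), k + 1 ≤ i.val →
      {j : Fin (Fintype.card V) | j < i ∧ G.Adj (e j) (e i)}.ncard = k)
    (i : Fin (Fintype.card V)) (hi : k + 1 ≤ i.val) :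
    ∃ q : Fin (k + 1), ∀ (j : Fin (Fintype.card V)) (hj : j < i),
      G.Adj (e j) (e i) → pcol G k e j ≠ q := by
  obtain ⟨q, hq⟩ := pigeon_fin (k := k)
    (Finset.univ.filter (fun j => j < i ∧ G.Adj (e j) (e i)))
    (le_of_eq (Pfin G k e hc i hi)) (pcol G k e)
  exact ⟨q, fun j hj hadj => hq j (by simp [hj, hadj])⟩

lemma pcol_adj
    (hc : ∀ i : Fin (Fintype.card V), k + 1 ≤ i.val →
      {j : Fin (Fintype.card V) | j < i ∧ G.Adj (e j) (e i)}.ncard = k) :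
    ∀ a b : Fin (Fintype.card V), G.Adj (e a) (e b) →
      pcol G k e a ≠ pcol G k e b := by
  have main : ∀ a b : Fin (Fintype.card V), a < b → G.Adj (e a) (e b) →
      pcol G k e a ≠ pcol G k e b := by
    intro a b hab hadj
    by_cases hbk : b.val < k + 1
    · have habv : a.val < b.val := hab
      have hak : a.val < k + 1 := lt_trans habv hbk
      rw [pcol_base G k e a hak, pcol_base G k e b hbk]
      intro hcontra
      rw [Fin.mk.injEq] at hcontra
      omega
    · exact pcol_choice G k e b hbk (pex G k e hc b (not_lt.mp hbk)) a hab hadj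
  intro a b hadj
  rcases lt_trichotomy a b with h | h | h
  · exact main a b h hadj
  · subst h; exact absurd hadj (G.irrefl)
  · exact (main b a h hadj.symm).symm

lemma pcol_missing
    (hc : ∀ i : Fin (Fintype.card V), k + 1 ≤ i.val →
      {j : Fin (Fintype.card V) | j < i ∧ G.Adj (e j) (e i)}.ncard = k)
    (hcl : ∀ i : Fin (Fintype.card V), k + 1 ≤ i.val →
      ∀ j₁ j₂ : Fin (Fintype.card V), j₁ < i → G.Adj (e j₁) (e i) →
        j₂ < i → G.Adj (e j₂) (e i) → j₁ ≠ j₂ → G.Adj (e j₁) (e j₂))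
    (i : Fin (Fintype.card V)) (hi : k + 1 ≤ i.val) (q : Fin (k + 1))
    (hmiss : ∀ (j : Fin (Fintype.card V)), j < i → G.Adj (e j) (e i) →
      pcol G k e j ≠ q) :
    q = pcol G k e i := by
  set F := Finset.univ.filter (fun j => j < i ∧ G.Adj (e j) (e i)) with hFdef
  have hFcard : F.card = k := Pfin G k e hc i hi
  have hiF : i ∉ F := by simp [hFdef]
  have hF'card : (insert i F).card = k + 1 := by
    rw [Finset.card_insert_of_notMem hiF, hFcard]
  have hmemF : ∀ j ∈ F, j < i ∧ G.Adj (e j) (e i) := by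
    intro j hj; simpa [hFdef] using hj
  have hinj : Set.InjOn (pcol G k e) ↑(insert i F) := by
    intro x hx y hy hxy
    by_contra hne
    simp only [Finset.coe_insert, Set.mem_insert_iff, Finset.mem_coe] at hx hy
    have hadj : G.Adj (e x) (e y) := by
      rcases hx with rfl | hxF
      · rcases hy with rfl | hyF
        · exact absurd rfl hne
        · exact ((hmemF y hyF).2).symm
      · rcases hy with rfl | hyF
        · exact (hmemF x hxF).2
        · exact hcl i hi x y (hmemF x hxF).1 (hmemF x hxF).2
            (hmemF y hyF).1 (hmemF y hyF).2 hne
    exact pcol_adj G k e hc x y hadj hxy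
  have himg : ((insert i F).image (pcol G k e)).card = k + 1 := by
    rw [Finset.card_image_of_injOn hinj, hF'card]
  have huniv : (insert i F).image (pcol G k e) = Finset.univ :=
    Finset.eq_univ_of_card _ (by rw [himg, Fintype.card_fin])
  have hqmem : q ∈ (insert i F).image (pcol G k e) := huniv ▸ Finset.mem_univ q
  obtain ⟨j, hjF', hjq⟩ := Finset.mem_image.mp hqmem
  rcases Finset.mem_insert.mp hjF' with rfl | hjF
  · exact hjq.symm
  · exact absurd hjq (hmiss j (hmemF j hjF).1 (hmemF j hjF).2)

end KTreeMain


section KTreeZ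

variable {V : Type*} [Fintype V] (G : SimpleGraph V) (k : ℕ)
variable (e : Fin (Fintype.card V) ≃ V)

lemma zex_holds
    (hb : ∀ i j : Fin (Fintype.card V), i.val < k + 1 → j.val < k + 1 → i ≠ j →
      G.Adj (e i) (e j))
    (hc : ∀ i : Fin (Fintype.card V), k + 1 ≤ i.val →
      {j : Fin (Fintype.card V) | j < i ∧ G.Adj (e j) (e i)}.ncard = k)
    (hcl : ∀ i : Fin (Fintype.card V), k + 1 ≤ i.val →
      ∀ j₁ j₂ : Fin (Fintype.card V), j₁ < i → G.Adj (e j₁) (e i) →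
        j₂ < i → G.Adj (e j₂) (e i) → j₁ ≠ j₂ → G.Adj (e j₁) (e j₂))
    (i : Fin (Fintype.card V)) (hi : k + 1 ≤ i.val) : Zex G e i := by
  set F := Finset.univ.filter (fun j => j < i ∧ G.Adj (e j) (e i)) with hFdef
  have hFcard : F.card = k := Pfin G k e hc i hi
  have hmemF : ∀ j ∈ F, j < i ∧ G.Adj (e j) (e i) := by
    intro j hj; simpa [hFdef] using hj
  have hmemF' : ∀ j : Fin (Fintype.card V), j < i → G.Adj (e j) (e i) → j ∈ F := by
    intro j h1 h2; simp [hFdef, h1, h2]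
  have hkn : k + 1 ≤ Fintype.card V := le_trans hi (le_of_lt i.isLt)
  by_cases hall : ∀ j ∈ F, j.val < k + 1
  · obtain ⟨q, hq⟩ := pigeon_fin (k := k) F hFcard.le
      (fun j => if hj : j.val < k + 1 then (⟨j.val, hj⟩ : Fin (k + 1)) else 0)
    refine ⟨⟨q.val, lt_of_lt_of_le q.isLt hkn⟩, ?_, ?_⟩
    · rw [Fin.lt_def]; simpa using lt_of_lt_of_le q.isLt hi
    · intro j hj hadj
      have hjF : j ∈ F := hmemF' j hj hadj
      have hjk : j.val < k + 1 := hall j hjF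
      have hne : (⟨q.val, lt_of_lt_of_le q.isLt hkn⟩ : Fin (Fintype.card V)) ≠ j := by
        intro hcontra
        apply hq j hjF
        rw [dif_pos hjk]
        have : q.val = j.val := by
          have := congrArg Fin.val hcontra; simpa using this
        exact Fin.ext this.symm
      exact hb _ j q.isLt hjk hne
  · push_neg at hall
    obtain ⟨m0, hm0F, hm0k⟩ := hall
    have hFne : F.Nonempty := ⟨m0, hm0F⟩
    set m := F.max' hFne with hmdef
    have hmF : m ∈ F := F.max'_mem hFne
    have hmk : k + 1 ≤ m.val := le_trans hm0k (F.le_max' m0 hm0F)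
    obtain ⟨hmi, hmadj⟩ := hmemF m hmF
    set Pm := Finset.univ.filter (fun j => j < m ∧ G.Adj (e j) (e m)) with hPmdef
    have hPmcard : Pm.card = k := Pfin G k e hc m hmk
    have hmemPm : ∀ j ∈ Pm, j < m ∧ G.Adj (e j) (e m) := by
      intro j hj; simpa [hPmdef] using hj
    have hsub : F.erase m ⊆ Pm := by
      intro y hy
      obtain ⟨hym, hyF⟩ := Finset.mem_erase.mp hy
      obtain ⟨hyi, hyadj⟩ := hmemF y hyF
      have hylt : y < m := lt_of_le_of_ne (F.le_max' y hyF) hym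
      have hadjym : G.Adj (e y) (e m) := hcl i hi y m hyi hyadj hmi hmadj hym
      simp [hPmdef, hylt, hadjym]
    have hkpos : 0 < k := by
      have : 0 < F.card := Finset.card_pos.mpr hFne
      omega
    have hcard2 : (F.erase m).card = k - 1 := by
      rw [Finset.card_erase_of_mem hmF, hFcard]
    have hex : ∃ z ∈ Pm, z ∉ F.erase m := by
      by_contra hcon
      push_neg at hcon
      have := Finset.card_le_card hcon
      omega
    obtain ⟨z, hzPm, hznot⟩ := hex
    obtain ⟨hzm, hzadj⟩ := hmemPm z hzPm
    refine ⟨z, lt_trans hzm hmi, ?_⟩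
    intro j hj hadjji
    have hjF : j ∈ F := hmemF' j hj hadjji
    by_cases hjm : j = m
    · subst hjm; exact hzadj
    · have hjPm : j ∈ Pm := hsub (Finset.mem_erase.mpr ⟨hjm, hjF⟩)
      have hzj : z ≠ j := by
        rintro rfl
        exact hznot (Finset.mem_erase.mpr ⟨hjm, hjF⟩)
      obtain ⟨hjm', hjadj⟩ := hmemPm j hjPm
      exact hcl m hmk z j hzm hzadj hjm' hjadj hzj

lemma pcol_z
    (hc : ∀ i : Fin (Fintype.card V), k + 1 ≤ i.val →
      {j : Fin (Fintype.card V) | j < i ∧ G.Adj (e j) (e i)}.ncard = k)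
    (hcl : ∀ i : Fin (Fintype.card V), k + 1 ≤ i.val →
      ∀ j₁ j₂ : Fin (Fintype.card V), j₁ < i → G.Adj (e j₁) (e i) →
        j₂ < i → G.Adj (e j₂) (e i) → j₁ ≠ j₂ → G.Adj (e j₁) (e j₂))
    (i : Fin (Fintype.card V)) (hi : k + 1 ≤ i.val) (hz : Zex G e i) :
    pcol G k e hz.choose = pcol G k e i := by
  apply pcol_missing G k e hc hcl i hi
  intro j hj hadj
  exact (pcol_adj G k e hc hz.choose j (hz.choose_spec.2 j hj hadj)).symm

end KTreeZ


section KTreeFinal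

variable {V : Type*} [Fintype V] (G : SimpleGraph V) (k : ℕ)
variable (e : Fin (Fintype.card V) ≃ V)

lemma mem_closedNbhd' {w v : V} : w ∈ closedNbhd G v ↔ w = v ∨ G.Adj v w := by
  simp [closedNbhd, Set.mem_insert_iff]

noncomputable def kcolor : V → Fin (2 * k + 2) := fun v =>
  ⟨(pcol G k e (e.symm v)).val + (if bcol G k e (e.symm v) = true then k + 1 else 0), by
    have := (pcol G k e (e.symm v)).isLt
    split <;> omega⟩

lemma kcolor_parts {a b : Fin (Fintype.card V)}
    (h : kcolor G k e (e a) = kcolor G k e (e b)) :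
    pcol G k e a = pcol G k e b ∧ bcol G k e a = bcol G k e b := by
  have hv := congrArg Fin.val h
  simp only [kcolor, Equiv.symm_apply_apply] at hv
  have h1 := (pcol G k e a).isLt
  have h2 := (pcol G k e b).isLt
  cases hA : bcol G k e a <;> cases hB : bcol G k e b <;>
    rw [hA, hB] at hv <;> simp at hv
  · exact ⟨Fin.ext (by omega), rfl⟩
  · exact ((by omega : False)).elim
  · exact ((by omega : False)).elim
  · exact ⟨Fin.ext (by omega), rfl⟩

lemma not_in_image
    (hc : ∀ i : Fin (Fintype.card V), k + 1 ≤ i.val →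
      {j : Fin (Fintype.card V) | j < i ∧ G.Adj (e j) (e i)}.ncard = k)
    (b w0 : Fin (Fintype.card V))
    (hp : pcol G k e w0 = pcol G k e b)
    (hbw : bcol G k e w0 = !(bcol G k e b)) :
    kcolor G k e (e w0) ∉ (kcolor G k e) '' closedNbhd G (e b) := by
  rintro ⟨w, hw, hcw⟩
  obtain ⟨j, rfl⟩ : ∃ j, w = e j := ⟨e.symm w, (e.apply_symm_apply w).symm⟩
  obtain ⟨hp', hb'⟩ := kcolor_parts G k e hcw
  rcases (mem_closedNbhd' G).mp hw with heq | hadj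
  · have hjb : j = b := e.injective heq
    subst hjb
    rw [hbw] at hb'
    simp at hb'
  · have := pcol_adj G k e hc b j hadj
    rw [hp] at hp'
    exact this hp'.symm

lemma case1
    (hb : ∀ i j : Fin (Fintype.card V), i.val < k + 1 → j.val < k + 1 → i ≠ j →
      G.Adj (e i) (e j))
    (hc : ∀ i : Fin (Fintype.card V), k + 1 ≤ i.val →
      {j : Fin (Fintype.card V) | j < i ∧ G.Adj (e j) (e i)}.ncard = k)
    (hcl : ∀ i : Fin (Fintype.card V), k + 1 ≤ i.val →
      ∀ j₁ j₂ : Fin (Fintype.card V), j₁ < i → G.Adj (e j₁) (e i) →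
        j₂ < i → G.Adj (e j₂) (e i) → j₁ ≠ j₂ → G.Adj (e j₁) (e j₂))
    (a b : Fin (Fintype.card V)) (hab : a < b) (hbk : k + 1 ≤ b.val)
    (hadj : G.Adj (e a) (e b)) :
    (kcolor G k e) '' closedNbhd G (e a) ≠ (kcolor G k e) '' closedNbhd G (e b) := by
  have hz := zex_holds G k e hb hc hcl b hbk
  have hzspec := hz.choose_spec
  have hpz : pcol G k e hz.choose = pcol G k e b := pcol_z G k e hc hcl b hbk hz
  have hbz : bcol G k e hz.choose = !(bcol G k e b) := by
    have h2 := bcol_choice G k e b (by omega) hz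
    rw [h2]; simp
  intro hEq
  have hmem : kcolor G k e (e hz.choose) ∈ (kcolor G k e) '' closedNbhd G (e a) := by
    refine ⟨e hz.choose, ?_, rfl⟩
    exact (mem_closedNbhd' G).mpr (Or.inr (hzspec.2 a hab hadj).symm)
  rw [hEq] at hmem
  exact not_in_image G k e hc b hz.choose hpz hbz hmem

lemma case2aux
    (hb : ∀ i j : Fin (Fintype.card V), i.val < k + 1 → j.val < k + 1 → i ≠ j →
      G.Adj (e i) (e j))
    (hc : ∀ i : Fin (Fintype.card V), k + 1 ≤ i.val →
      {j : Fin (Fintype.card V) | j < i ∧ G.Adj (e j) (e i)}.ncard = k)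
    (hcl : ∀ i : Fin (Fintype.card V), k + 1 ≤ i.val →
      ∀ j₁ j₂ : Fin (Fintype.card V), j₁ < i → G.Adj (e j₁) (e i) →
        j₂ < i → G.Adj (e j₂) (e i) → j₁ ≠ j₂ → G.Adj (e j₁) (e j₂))
    (a b x : Fin (Fintype.card V))
    (ha : a.val < k + 1) (hbk : b.val < k + 1) (hadj : G.Adj (e a) (e b))
    (himg : (kcolor G k e) '' closedNbhd G (e a) = (kcolor G k e) '' closedNbhd G (e b))
    (hmin : ∀ j : Fin (Fintype.card V),
      ((e j ∈ closedNbhd G (e a) ∧ e j ∉ closedNbhd G (e b)) ∨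
       (e j ∈ closedNbhd G (e b) ∧ e j ∉ closedNbhd G (e a))) → x ≤ j)
    (hxa : e x ∈ closedNbhd G (e a)) (hxb : e x ∉ closedNbhd G (e b)) : False := by
  have hxneb : e x ≠ e b := by
    intro h
    exact hxb (h ▸ (mem_closedNbhd' G).mpr (Or.inl rfl))
  have hnadj : ¬ G.Adj (e b) (e x) := fun h => hxb ((mem_closedNbhd' G).mpr (Or.inr h))
  have hxnea : e x ≠ e a := by
    intro h
    apply hxb
    rw [h]
    exact (mem_closedNbhd' G).mpr (Or.inr hadj.symm)
  have hax : G.Adj (e a) (e x) := by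
    rcases (mem_closedNbhd' G).mp hxa with h | h
    · exact absurd h hxnea
    · exact h
  have hxk : k + 1 ≤ x.val := by
    by_contra hxk
    push_neg at hxk
    have hxb' : b ≠ x := by
      intro h; exact hxneb (congrArg e h.symm)
    exact hnadj (hb b x hbk hxk hxb')
  have haxlt : a < x := by rw [Fin.lt_def]; omega
  have hpx : pcol G k e x = pcol G k e b := by
    refine (pcol_missing G k e hc hcl x hxk (pcol G k e b) ?_).symm
    intro j hj hadjjx
    have hjb : j ≠ b := by rintro rfl; exact hnadj hadjjx
    have hjadjb : G.Adj (e j) (e b) := by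
      by_cases hja : j = a
      · subst hja; exact hadj
      · have hja' : G.Adj (e j) (e a) := hcl x hxk j a hj hadjjx haxlt hax hja
        have hjNa : e j ∈ closedNbhd G (e a) := (mem_closedNbhd' G).mpr (Or.inr hja'.symm)
        have hjNb : e j ∈ closedNbhd G (e b) := by
          by_contra hnot
          exact absurd (hmin j (Or.inl ⟨hjNa, hnot⟩)) (not_le.mpr hj)
        rcases (mem_closedNbhd' G).mp hjNb with h | h
        · exact absurd (e.injective h) hjb
        · exact h.symm
    exact pcol_adj G k e hc j b hjadjb
  have hz := zex_holds G k e hb hc hcl x hxk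
  have hzspec := hz.choose_spec
  have hpz : pcol G k e hz.choose = pcol G k e b := by
    rw [pcol_z G k e hc hcl x hxk hz]; exact hpx
  have hbz : bcol G k e hz.choose = !(bcol G k e x) := by
    have h2 := bcol_choice G k e x (by omega) hz
    rw [h2]; simp
  have hzNa : e hz.choose ∈ closedNbhd G (e a) :=
    (mem_closedNbhd' G).mpr (Or.inr (hzspec.2 a haxlt hax).symm)
  have hbb : bcol G k e b = false := bcol_base G k e b hbk
  obtain ⟨w0, hw0Na, hw0p, hw0b⟩ : ∃ w0 : Fin (Fintype.card V),
      e w0 ∈ closedNbhd G (e a) ∧ pcol G k e w0 = pcol G k e b ∧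
        bcol G k e w0 = true := by
    cases hbx : bcol G k e x
    · exact ⟨hz.choose, hzNa, hpz, by rw [hbz, hbx]; rfl⟩
    · exact ⟨x, hxa, hpx, hbx⟩
  have hmem : kcolor G k e (e w0) ∈ (kcolor G k e) '' closedNbhd G (e a) :=
    ⟨e w0, hw0Na, rfl⟩
  rw [himg] at hmem
  exact not_in_image G k e hc b w0 hw0p (by rw [hw0b, hbb]; rfl) hmem

lemma case2
    (hb : ∀ i j : Fin (Fintype.card V), i.val < k + 1 → j.val < k + 1 → i ≠ j →
      G.Adj (e i) (e j))
    (hc : ∀ i : Fin (Fintype.card V), k + 1 ≤ i.val →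
      {j : Fin (Fintype.card V) | j < i ∧ G.Adj (e j) (e i)}.ncard = k)
    (hcl : ∀ i : Fin (Fintype.card V), k + 1 ≤ i.val →
      ∀ j₁ j₂ : Fin (Fintype.card V), j₁ < i → G.Adj (e j₁) (e i) →
        j₂ < i → G.Adj (e j₂) (e i) → j₁ ≠ j₂ → G.Adj (e j₁) (e j₂))
    (a b : Fin (Fintype.card V)) (ha : a.val < k + 1) (hbk : b.val < k + 1)
    (hadj : G.Adj (e a) (e b))
    (hN : closedNbhd G (e a) ≠ closedNbhd G (e b)) :
    (kcolor G k e) '' closedNbhd G (e a) ≠ (kcolor G k e) '' closedNbhd G (e b) := by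
  intro himg
  have hex : ∃ y, ¬(y ∈ closedNbhd G (e a) ↔ y ∈ closedNbhd G (e b)) := by
    by_contra hcon
    push_neg at hcon
    exact hN (Set.ext fun y => (hcon y))
  obtain ⟨y, hy⟩ := hex
  set Q : Fin (Fintype.card V) → Prop := fun j =>
    (e j ∈ closedNbhd G (e a) ∧ e j ∉ closedNbhd G (e b)) ∨
    (e j ∈ closedNbhd G (e b) ∧ e j ∉ closedNbhd G (e a)) with hQdef
  have hQy : Q (e.symm y) := by
    rw [hQdef]
    simp only [e.apply_symm_apply]
    tauto
  set T := Finset.univ.filter Q with hTdef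
  have hTne : T.Nonempty := ⟨e.symm y, by simp [hTdef, hQy]⟩
  set x := T.min' hTne with hxdef
  have hQx : Q x := by
    have := T.min'_mem hTne
    simp only [hTdef, Finset.mem_filter] at this
    exact this.2
  have hmin : ∀ j, Q j → x ≤ j := fun j hj =>
    T.min'_le j (by simp [hTdef, hj])
  rcases hQx with ⟨h1, h2⟩ | ⟨h1, h2⟩
  · exact case2aux G k e hb hc hcl a b x ha hbk hadj himg hmin h1 h2
  · exact case2aux G k e hb hc hcl b a x hbk ha hadj.symm himg.symm
      (fun j hj => hmin j hj.symm) h1 h2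

end KTreeFinal


/-- If `G` is a `k`-tree, then `G` admits a lid-coloring using at most `2k+2` colors. -/
theorem stmt7 {V : Type*} [Fintype V] (G : SimpleGraph V) (k : ℕ)
    (h : IsKTree G k) : LidColorable G (2 * k + 2) := by
  obtain ⟨hkN, e, hb, hstep⟩ := h
  have hc : ∀ i : Fin (Fintype.card V), k + 1 ≤ i.val →
      {j : Fin (Fintype.card V) | j < i ∧ G.Adj (e j) (e i)}.ncard = k :=
    fun i hi => (hstep i hi).1
  have hcl : ∀ i : Fin (Fintype.card V), k + 1 ≤ i.val →
      ∀ j₁ j₂ : Fin (Fintype.card V), j₁ < i → G.Adj (e j₁) (e i) →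
        j₂ < i → G.Adj (e j₂) (e i) → j₁ ≠ j₂ → G.Adj (e j₁) (e j₂) :=
    fun i hi => (hstep i hi).2
  refine ⟨kcolor G k e, ?_, ?_⟩
  · intro u v huv
    obtain ⟨a, rfl⟩ := e.surjective u
    obtain ⟨b, rfl⟩ := e.surjective v
    intro hcc
    obtain ⟨hp, _⟩ := kcolor_parts G k e hcc
    exact pcol_adj G k e hc a b huv hp
  · intro u v huv hN
    obtain ⟨a, rfl⟩ := e.surjective u
    obtain ⟨b, rfl⟩ := e.surjective v
    rcases lt_trichotomy a b with hab | hab | hab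
    · by_cases hbk : k + 1 ≤ b.val
      · exact case1 G k e hb hc hcl a b hab hbk huv
      · push_neg at hbk
        have habv : a.val < b.val := hab
        exact case2 G k e hb hc hcl a b (by omega) hbk huv hN
    · subst hab; exact absurd huv G.irrefl
    · by_cases hak : k + 1 ≤ a.val
      · exact (case1 G k e hb hc hcl b a hab hak huv.symm).symm
      · push_neg at hak
        have habv : b.val < a.val := hab
        exact (case2 G k e hb hc hcl b a (by omega) hak huv.symm hN.symm).symm
end

section
/- For every integer k ≥ 1, the graph P^k_{2k+2} satisfies χ_lid(P^k_{2k+2}) = 2k + 2. -/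
open SimpleGraph

/-- The graph `P^k_ℓ` on vertices `v₀, …, v_{ℓ-1}` in which two distinct vertices `vᵢ`
and `vⱼ` are adjacent whenever `|i - j| ≤ k`. -/
def pathPower (k l : ℕ) : SimpleGraph (Fin l) :=
  SimpleGraph.fromRel (fun i j => i.val ≤ j.val ∧ j.val - i.val ≤ k)

lemma mem_cn {k l : ℕ} (v u : Fin l) :
    u ∈ closedNbhd (pathPower k l) v ↔ u.val ≤ v.val + k ∧ v.val ≤ u.val + k := by
  simp only [closedNbhd, Set.mem_insert_iff, mem_neighborSet, pathPower, fromRel_adj]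
  constructor
  · rintro (rfl | ⟨hne, (⟨h1, h2⟩ | ⟨h1, h2⟩)⟩) <;> omega
  · intro h
    rcases eq_or_ne u.val v.val with he | hne
    · left; exact Fin.ext he
    · right
      refine ⟨fun hc => hne (by rw [hc]), ?_⟩
      rcases le_total v.val u.val with hle | hle
      · left; exact ⟨hle, by omega⟩
      · right; exact ⟨hle, by omega⟩

lemma pp_adj {k l : ℕ} {a b : Fin l} (h : a.val ≠ b.val)
    (h2 : a.val ≤ b.val + k) (h3 : b.val ≤ a.val + k) : (pathPower k l).Adj a b := by
  rw [pathPower, fromRel_adj]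
  refine ⟨fun hc => h (by rw [hc]), ?_⟩
  rcases le_total a.val b.val with hle | hle
  · left; exact ⟨hle, by omega⟩
  · right; exact ⟨hle, by omega⟩

lemma lid_inj (k : ℕ) (hk : 1 ≤ k) {α : Type*} (c : Fin (2 * k + 2) → α)
    (hc : IsLidColoring (pathPower k (2 * k + 2)) c) : Function.Injective c := by
  set G := pathPower k (2 * k + 2) with hG
  have main : ∀ a b : Fin (2 * k + 2), a.val < b.val → c a ≠ c b := by
    intro a b hab heq
    have hbb := b.isLt
    have haa := a.isLt
    by_cases hadj : b.val ≤ a.val + k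
    · exact hc.1 (pp_adj (by omega) (by omega) (by omega)) heq
    push_neg at hadj
    by_cases hb : b.val ≤ 2 * k
    · -- use adjacent pair (b-k-1, b-k)
      set i : Fin (2 * k + 2) := ⟨b.val - k - 1, by omega⟩ with hi
      set j : Fin (2 * k + 2) := ⟨b.val - k, by omega⟩ with hj
      have hiv : i.val = b.val - k - 1 := rfl
      have hjv : j.val = b.val - k := rfl
      have hadjij : G.Adj i j := pp_adj (by omega) (by omega) (by omega)
      have hNne : closedNbhd G i ≠ closedNbhd G j := by
        intro h
        have hbj : b ∈ closedNbhd G j := (mem_cn j b).2 ⟨by omega, by omega⟩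
        rw [← h] at hbj
        have := (mem_cn i b).1 hbj
        omega
      refine hc.2 hadjij hNne ?_
      ext x
      simp only [Set.mem_image]
      constructor
      · rintro ⟨y, hy, rfl⟩
        have hy' := (mem_cn i y).1 hy
        exact ⟨y, (mem_cn j y).2 ⟨by omega, by omega⟩, rfl⟩
      · rintro ⟨y, hy, rfl⟩
        have hy' := (mem_cn j y).1 hy
        by_cases hyb : y.val + 1 ≤ b.val
        · exact ⟨y, (mem_cn i y).2 ⟨by omega, by omega⟩, rfl⟩
        · have hyy : y = b := Fin.ext (by omega)
          subst hyy
          exact ⟨a, (mem_cn i a).2 ⟨by omega, by omega⟩, heq⟩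
    · have hb' : b.val = 2 * k + 1 := by omega
      by_cases ha : 1 ≤ a.val
      · -- use adjacent pair (a+k, a+k+1)
        set i : Fin (2 * k + 2) := ⟨a.val + k, by omega⟩ with hi
        set j : Fin (2 * k + 2) := ⟨a.val + k + 1, by omega⟩ with hj
        have hiv : i.val = a.val + k := rfl
        have hjv : j.val = a.val + k + 1 := rfl
        have hadjij : G.Adj i j := pp_adj (by omega) (by omega) (by omega)
        have hNne : closedNbhd G i ≠ closedNbhd G j := by
          intro h
          have hai : a ∈ closedNbhd G i := (mem_cn i a).2 ⟨by omega, by omega⟩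
          rw [h] at hai
          have := (mem_cn j a).1 hai
          omega
        refine (hc.2 hadjij hNne ?_)
        ext x
        simp only [Set.mem_image]
        constructor
        · rintro ⟨y, hy, rfl⟩
          have hy' := (mem_cn i y).1 hy
          by_cases hya : a.val + 1 ≤ y.val
          · exact ⟨y, (mem_cn j y).2 ⟨by omega, by omega⟩, rfl⟩
          · have hyy : y = a := Fin.ext (by omega)
            subst hyy
            exact ⟨b, (mem_cn j b).2 ⟨by omega, by omega⟩, heq.symm⟩
        · rintro ⟨y, hy, rfl⟩
          have hy' := (mem_cn j y).1 hy
          exact ⟨y, (mem_cn i y).2 ⟨by omega, by omega⟩, rfl⟩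
      · -- a = 0, b = 2k+1; use adjacent pair (k, k+1)
        have ha' : a.val = 0 := by omega
        set i : Fin (2 * k + 2) := ⟨k, by omega⟩ with hi
        set j : Fin (2 * k + 2) := ⟨k + 1, by omega⟩ with hj
        have hiv : i.val = k := rfl
        have hjv : j.val = k + 1 := rfl
        have hadjij : G.Adj i j := pp_adj (by omega) (by omega) (by omega)
        have hNne : closedNbhd G i ≠ closedNbhd G j := by
          intro h
          have hai : a ∈ closedNbhd G i := (mem_cn i a).2 ⟨by omega, by omega⟩
          rw [h] at hai
          have := (mem_cn j a).1 hai
          omega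
        refine (hc.2 hadjij hNne ?_)
        ext x
        simp only [Set.mem_image]
        constructor
        · rintro ⟨y, hy, rfl⟩
          have hy' := (mem_cn i y).1 hy
          by_cases hya : 1 ≤ y.val
          · exact ⟨y, (mem_cn j y).2 ⟨by omega, by omega⟩, rfl⟩
          · have hyy : y = a := Fin.ext (by omega)
            subst hyy
            exact ⟨b, (mem_cn j b).2 ⟨by omega, by omega⟩, heq.symm⟩
        · rintro ⟨y, hy, rfl⟩
          have hy' := (mem_cn j y).1 hy
          by_cases hyb : y.val ≤ 2 * k
          · exact ⟨y, (mem_cn i y).2 ⟨by omega, by omega⟩, rfl⟩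
          · have hyy : y = b := Fin.ext (by omega)
            subst hyy
            exact ⟨a, (mem_cn i a).2 ⟨by omega, by omega⟩, heq⟩
  intro a b h
  by_contra hne
  rcases lt_trichotomy a.val b.val with h1 | h1 | h1
  · exact main a b h1 h
  · exact hne (Fin.ext h1)
  · exact main b a h1 h.symm

/-- For every `k ≥ 1`, the graph `P^k_{2k+2}` has lid-chromatic number exactly `2k+2`:
it is `(2k+2)`-lid-colorable and every lid-coloring of it uses at least `2k+2` colors. -/
theorem stmt8 (k : ℕ) (hk : 1 ≤ k) :
    LidColorable (pathPower k (2 * k + 2)) (2 * k + 2) ∧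
    ∀ {α : Type*} (c : Fin (2 * k + 2) → α), IsLidColoring (pathPower k (2 * k + 2)) c →
      2 * k + 2 ≤ (Set.range c).ncard := by
  constructor
  · refine ⟨id, fun u v h => h.ne, fun u v hadj hne himg => hne ?_⟩
    rwa [Set.image_id, Set.image_id] at himg
  · intro α c hc
    have hinj := lid_inj k hk c hc
    have : (Set.range c).ncard = 2 * k + 2 := by
      rw [← Set.image_univ, Set.ncard_image_of_injective _ hinj, Set.ncard_univ,
        Nat.card_eq_fintype_card, Fintype.card_fin]
    omega
end

section
/- Every split graph G satisfies χ_lid(G) ≤ 2ω(G), where ω(G) is the clique number of G. -/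
open SimpleGraph

/-- `G` is a split graph: its vertex set can be partitioned into a clique `K` and an
independent set `Kᶜ`. -/
def IsSplit {V : Type*} (G : SimpleGraph V) : Prop :=
  ∃ K : Set V, G.IsClique K ∧ ∀ ⦃u v : V⦄, u ∉ K → v ∉ K → ¬ G.Adj u v

open Finset in
/-- Bondy's theorem: a family of `k` distinct finite sets can be distinguished by their
traces on a set of fewer than `k` elements. -/
lemma bondy_aux {α : Type*} [DecidableEq α] :
    ∀ (n : ℕ) (F : Finset (Finset α)), F.card ≤ n →
    ∃ X : Finset α, (F.Nonempty → X.card < F.card) ∧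
      ∀ B₁ ∈ F, ∀ B₂ ∈ F, B₁ ∩ X = B₂ ∩ X → B₁ = B₂ := by
  intro n
  induction n with
  | zero =>
    intro F hF
    have : F = ∅ := Finset.card_eq_zero.mp (Nat.le_zero.mp hF)
    subst this
    exact ⟨∅, fun h => absurd h (by simp), by simp⟩
  | succ n IH =>
    intro F hF
    by_cases hle : F.card ≤ 1
    · refine ⟨∅, fun h => by simpa using h.card_pos, ?_⟩
      intro B₁ h₁ B₂ h₂ _
      exact Finset.card_le_one.mp hle B₁ h₁ B₂ h₂
    · obtain ⟨B₁, h₁, B₂, h₂, hne⟩ := Finset.one_lt_card.mp (show 1 < F.card by omega)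
      have hx : ∃ x, (F.filter (fun B => x ∈ B)).Nonempty ∧
          (F.filter (fun B => x ∉ B)).Nonempty := by
        by_cases hs : B₁ ⊆ B₂
        · have : ¬ B₂ ⊆ B₁ := fun h' => hne (Finset.Subset.antisymm hs h')
          obtain ⟨x, hx₁, hx₂⟩ := Finset.not_subset.mp this
          exact ⟨x, ⟨B₂, Finset.mem_filter.mpr ⟨h₂, hx₁⟩⟩,
            ⟨B₁, Finset.mem_filter.mpr ⟨h₁, hx₂⟩⟩⟩
        · obtain ⟨x, hx₁, hx₂⟩ := Finset.not_subset.mp hs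
          exact ⟨x, ⟨B₁, Finset.mem_filter.mpr ⟨h₁, hx₁⟩⟩,
            ⟨B₂, Finset.mem_filter.mpr ⟨h₂, hx₂⟩⟩⟩
      obtain ⟨x, hF₁, hF₀⟩ := hx
      set F₁ := F.filter (fun B => x ∈ B) with hF₁def
      set F₀ := F.filter (fun B => x ∉ B) with hF₀def
      have hsum : F₁.card + F₀.card = F.card :=
        Finset.card_filter_add_card_filter_not (p := fun B => x ∈ B)
      have hc₁ := hF₁.card_pos
      have hc₀ := hF₀.card_pos
      obtain ⟨X₀, hX₀c, hX₀i⟩ := IH F₀ (by omega)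
      obtain ⟨X₁, hX₁c, hX₁i⟩ := IH F₁ (by omega)
      have hc₀' := hX₀c hF₀
      have hc₁' := hX₁c hF₁
      refine ⟨insert x (X₀ ∪ X₁), ?_, ?_⟩
      · intro _
        have h1 := Finset.card_insert_le x (X₀ ∪ X₁)
        have h2 := Finset.card_union_le X₀ X₁
        omega
      · intro B hB B' hB' hBX
        have hiff : ∀ y ∈ insert x (X₀ ∪ X₁), y ∈ B ↔ y ∈ B' := by
          intro y hy
          constructor <;> intro hyB
          · have h3 : y ∈ B ∩ insert x (X₀ ∪ X₁) := Finset.mem_inter.mpr ⟨hyB, hy⟩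
            rw [hBX] at h3
            exact (Finset.mem_inter.mp h3).1
          · have h3 : y ∈ B' ∩ insert x (X₀ ∪ X₁) := Finset.mem_inter.mpr ⟨hyB, hy⟩
            rw [← hBX] at h3
            exact (Finset.mem_inter.mp h3).1
        have hxiff := hiff x (Finset.mem_insert_self _ _)
        by_cases hxB : x ∈ B
        · refine hX₁i B (Finset.mem_filter.mpr ⟨hB, hxB⟩) B'
            (Finset.mem_filter.mpr ⟨hB', hxiff.mp hxB⟩) ?_
          ext y
          simp only [Finset.mem_inter]
          constructor <;> rintro ⟨hyB, hyX⟩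
          · exact ⟨(hiff y (Finset.mem_insert_of_mem (Finset.mem_union_right _ hyX))).mp hyB, hyX⟩
          · exact ⟨(hiff y (Finset.mem_insert_of_mem (Finset.mem_union_right _ hyX))).mpr hyB, hyX⟩
        · refine hX₀i B (Finset.mem_filter.mpr ⟨hB, hxB⟩) B'
            (Finset.mem_filter.mpr ⟨hB', fun h => hxB (hxiff.mpr h)⟩) ?_
          ext y
          simp only [Finset.mem_inter]
          constructor <;> rintro ⟨hyB, hyX⟩
          · exact ⟨(hiff y (Finset.mem_insert_of_mem (Finset.mem_union_left _ hyX))).mp hyB, hyX⟩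
          · exact ⟨(hiff y (Finset.mem_insert_of_mem (Finset.mem_union_left _ hyX))).mpr hyB, hyX⟩

/-- With `t ≥ k` colors one can distinguish `k` distinct finite sets by the images
of an appropriate coloring. -/
lemma exists_distinguishing_coloring {α : Type*} [DecidableEq α] (F : Finset (Finset α))
    (t : ℕ) (hcard : F.card ≤ t) (ht : 1 ≤ t) :
    ∃ c : α → Fin t, ∀ B₁ ∈ F, ∀ B₂ ∈ F, B₁.image c = B₂.image c → B₁ = B₂ := by
  obtain ⟨X, hXc, hXi⟩ := bondy_aux F.card F le_rfl
  rcases F.eq_empty_or_nonempty with rfl | hne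
  · exact ⟨fun _ => ⟨0, ht⟩, by simp⟩
  have hXlt : X.card < t := lt_of_lt_of_le (hXc hne) hcard
  set e := X.equivFin with he
  set c : α → Fin t := fun y =>
    if h : y ∈ X then ⟨(e ⟨y, h⟩ : ℕ) + 1, by have := (e ⟨y, h⟩).isLt; omega⟩
    else ⟨0, ht⟩ with hcdef
  have main : ∀ (C₁ C₂ : Finset α), C₁.image c = C₂.image c → C₁ ∩ X ⊆ C₂ ∩ X := by
    intro C₁ C₂ himg y hy
    obtain ⟨hyC, hyX⟩ := Finset.mem_inter.mp hy
    have hmem : c y ∈ C₂.image c := himg ▸ Finset.mem_image_of_mem c hyC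
    obtain ⟨z, hz, hcz⟩ := Finset.mem_image.mp hmem
    have hcyv : (c y : ℕ) = (e ⟨y, hyX⟩ : ℕ) + 1 := by simp [hcdef, dif_pos hyX]
    by_cases hzX : z ∈ X
    · have hczv : (c z : ℕ) = (e ⟨z, hzX⟩ : ℕ) + 1 := by simp [hcdef, dif_pos hzX]
      have hval : (e ⟨z, hzX⟩ : ℕ) = (e ⟨y, hyX⟩ : ℕ) := by
        have := congrArg Fin.val hcz; omega
      have : (⟨z, hzX⟩ : X) = ⟨y, hyX⟩ := e.injective (Fin.ext hval)
      have hzy : z = y := congrArg Subtype.val this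
      subst hzy
      exact Finset.mem_inter.mpr ⟨hz, hyX⟩
    · have hczv : (c z : ℕ) = 0 := by simp [hcdef, dif_neg hzX]
      have := congrArg Fin.val hcz; omega
  refine ⟨c, ?_⟩
  intro B₁ h₁ B₂ h₂ himg
  exact hXi B₁ h₁ B₂ h₂ (Finset.Subset.antisymm (main B₁ B₂ himg) (main B₂ B₁ himg.symm))

/-- Every split graph `G` admits a lid-coloring using at most `2 ω(G)` colors. -/
theorem stmt10 {V : Type*} [Fintype V] (G : SimpleGraph V) (h : IsSplit G) :
    LidColorable G (2 * G.cliqueNum) := by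
  classical
  obtain ⟨K₀, hK₀cl, hK₀ind⟩ := h
  rcases isEmpty_or_nonempty V with hV | hV
  · exact ⟨fun v => isEmptyElim v, fun u v hadj => isEmptyElim u, fun u v hadj => isEmptyElim u⟩
  obtain ⟨v₀⟩ := hV
  have hn1 : 1 ≤ G.cliqueNum := by
    have hcl : G.IsClique (↑({v₀} : Finset V) : Set V) := by simp
    have := SimpleGraph.IsClique.card_le_cliqueNum (G := G) (tc := hcl)
    simpa using this
  set n := G.cliqueNum with hn
  -- a clique of maximum cardinality containing `K₀`
  set T : Finset (Finset V) :=
    Finset.univ.filter (fun s => K₀.toFinset ⊆ s ∧ G.IsClique (↑s : Set V)) with hT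
  have hmemT : K₀.toFinset ∈ T := by
    refine Finset.mem_filter.mpr ⟨Finset.mem_univ _, le_refl _, ?_⟩
    rw [Set.coe_toFinset]; exact hK₀cl
  obtain ⟨K, hKT, hKmax⟩ := Finset.exists_max_image T Finset.card ⟨_, hmemT⟩
  obtain ⟨-, hK₀K, hKcl⟩ := Finset.mem_filter.mp hKT
  have hmK : K.card ≤ n := SimpleGraph.IsClique.card_le_cliqueNum (G := G) (tc := hKcl)
  have hind : ∀ u v : V, u ∉ K → v ∉ K → ¬ G.Adj u v := by
    intro u v hu hv
    exact hK₀ind (fun hm => hu (hK₀K (Set.mem_toFinset.mpr hm)))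
      (fun hm => hv (hK₀K (Set.mem_toFinset.mpr hm)))
  have hmax : ∀ v, v ∉ K → ∃ k ∈ K, ¬ G.Adj v k := by
    intro v hv
    by_contra hcon
    push_neg at hcon
    have hcl' : G.IsClique (↑(insert v K) : Set V) := by
      rw [Finset.coe_insert]
      exact hKcl.insert (fun b hb _ => hcon b hb)
    have hmem' : insert v K ∈ T := Finset.mem_filter.mpr
      ⟨Finset.mem_univ _, hK₀K.trans (Finset.subset_insert _ _), hcl'⟩
    have := hKmax _ hmem'
    rw [Finset.card_insert_of_notMem hv] at this
    omega
  -- the traces of the neighborhoods on the independent part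
  set A : V → Finset V := fun u => G.neighborFinset u \ K with hA
  obtain ⟨cS, hcS⟩ := exists_distinguishing_coloring (K.image A) n
    ((Finset.card_image_le).trans hmK) hn1
  set e := K.equivFin with he
  set c : V → Fin (2 * n) := fun v =>
    if hv : v ∈ K then ⟨(e ⟨v, hv⟩ : ℕ), by have := (e ⟨v, hv⟩).isLt; omega⟩
    else ⟨n + (cS v : ℕ), by have := (cS v).isLt; omega⟩ with hc
  have hcK : ∀ v (hv : v ∈ K), (c v : ℕ) < n := by
    intro v hv
    have h1 : (c v : ℕ) = (e ⟨v, hv⟩ : ℕ) := by simp [hc, dif_pos hv]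
    have := (e ⟨v, hv⟩).isLt
    omega
  have hcS' : ∀ v, v ∉ K → (c v : ℕ) = n + (cS v : ℕ) := by
    intro v hv; simp [hc, dif_neg hv]
  have hinjK : ∀ u v (hu : u ∈ K) (hv : v ∈ K), c u = c v → u = v := by
    intro u v hu hv hcv
    have h0 := congrArg Fin.val hcv
    have h1 : (e ⟨u, hu⟩ : ℕ) = (e ⟨v, hv⟩ : ℕ) := by
      simpa [hc, dif_pos hu, dif_pos hv] using h0
    have h2 : (⟨u, hu⟩ : K) = ⟨v, hv⟩ := e.injective (Fin.ext h1)
    exact congrArg Subtype.val h2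
  have hmemClosed : ∀ u w : V, w ∈ closedNbhd G u ↔ w = u ∨ G.Adj u w := by
    intro u w; simp [closedNbhd, SimpleGraph.mem_neighborSet]
  have hAmem : ∀ u w : V, w ∈ A u ↔ G.Adj u w ∧ w ∉ K := by
    intro u w; simp [hA, Finset.mem_sdiff, SimpleGraph.mem_neighborFinset]
  have hKsub : ∀ u, u ∈ K → ∀ k, k ∈ K → k ∈ closedNbhd G u := by
    intro u hu k hk
    rcases eq_or_ne k u with rfl | hne
    · exact (hmemClosed k k).mpr (Or.inl rfl)
    · exact (hmemClosed u k).mpr (Or.inr (hKcl hu hk (Ne.symm hne)))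
  have hdecomp : ∀ u, u ∈ K → closedNbhd G u = (↑K : Set V) ∪ ↑(A u) := by
    intro u hu
    ext w
    simp only [Set.mem_union, Finset.mem_coe, hmemClosed, hAmem]
    constructor
    · rintro (rfl | hadj)
      · exact Or.inl hu
      · by_cases hw : w ∈ K
        · exact Or.inl hw
        · exact Or.inr ⟨hadj, hw⟩
    · rintro (hw | ⟨hadj, -⟩)
      · rcases eq_or_ne w u with rfl | hne
        · exact Or.inl rfl
        · exact Or.inr (hKcl hu hw (Ne.symm hne))
      · exact Or.inr hadj
  have hrecover : ∀ u v, u ∈ K → v ∈ K →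
      c '' closedNbhd G u = c '' closedNbhd G v → (A u).image cS ⊆ (A v).image cS := by
    intro u v hu hv himg β hβ
    obtain ⟨w, hw, rfl⟩ := Finset.mem_image.mp hβ
    obtain ⟨hadj, hwK⟩ := (hAmem u w).mp hw
    have hwN : w ∈ closedNbhd G u := (hmemClosed u w).mpr (Or.inr hadj)
    have hmem2 : c w ∈ c '' closedNbhd G v := himg ▸ Set.mem_image_of_mem c hwN
    obtain ⟨z, hz, hcz⟩ := hmem2
    have hzK : z ∉ K := by
      intro hzK
      have h1 := hcK z hzK
      have h2 := hcS' w hwK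
      have h3 := congrArg Fin.val hcz
      omega
    have hzA : z ∈ A v := by
      rcases (hmemClosed v z).mp hz with rfl | hadjz
      · exact absurd hv hzK
      · exact (hAmem v z).mpr ⟨hadjz, hzK⟩
    refine Finset.mem_image.mpr ⟨z, hzA, ?_⟩
    have h1 := hcS' z hzK
    have h2 := hcS' w hwK
    have h3 := congrArg Fin.val hcz
    exact Fin.ext (by omega)
  have hKS : ∀ u v, u ∈ K → v ∉ K → G.Adj u v →
      c '' closedNbhd G u ≠ c '' closedNbhd G v := by
    intro u v hu hv hadj heq
    obtain ⟨k, hk, hnadj⟩ := hmax v hv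
    have hkN : c k ∈ c '' closedNbhd G u := Set.mem_image_of_mem c (hKsub u hu k hk)
    rw [heq] at hkN
    obtain ⟨z, hz, hcz⟩ := hkN
    have hzK : z ∈ K := by
      by_contra hzK
      have h1 := hcS' z hzK
      have h2 := hcK k hk
      have h3 := congrArg Fin.val hcz
      omega
    have hzk : z = k := hinjK z k hzK hk hcz
    subst hzk
    rcases (hmemClosed v z).mp hz with rfl | hadjz
    · exact hv hzK
    · exact hnadj hadjz
  refine ⟨c, ?_, ?_⟩
  · intro u v hadj hcv
    by_cases hu : u ∈ K <;> by_cases hv : v ∈ K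
    · exact hadj.ne (hinjK u v hu hv hcv)
    · have h1 := hcK u hu
      have h2 := hcS' v hv
      have h3 := congrArg Fin.val hcv
      omega
    · have h1 := hcK v hv
      have h2 := hcS' u hu
      have h3 := congrArg Fin.val hcv
      omega
    · exact hind u v hu hv hadj
  · intro u v hadj hN heq
    by_cases hu : u ∈ K <;> by_cases hv : v ∈ K
    · have hAuv : A u ≠ A v := by
        intro hAeq
        apply hN
        rw [hdecomp u hu, hdecomp v hv, hAeq]
      have himg : (A u).image cS = (A v).image cS :=
        Finset.Subset.antisymm (hrecover u v hu hv heq) (hrecover v u hv hu heq.symm)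
      exact hAuv (hcS _ (Finset.mem_image_of_mem A hu) _ (Finset.mem_image_of_mem A hv) himg)
    · exact hKS u v hu hv hadj heq
    · exact hKS v u hv hu hadj.symm heq.symm
    · exact hind u v hu hv hadj
end

section
/- Let G be a split graph. If ω(G) ≥ 3, or if G is a star K_{1,n}, then χ_lid(G) ≤ 2ω(G) − 1. -/
open SimpleGraph

/-- `G` is a star `K_{1,n}`: there is a hub adjacent to all other vertices, and there are
no other edges. -/
def IsStar {V : Type*} (G : SimpleGraph V) : Prop :=
  ∃ hub : V, ∀ u v : V, G.Adj u v ↔ (u = hub ∧ v ≠ hub) ∨ (v = hub ∧ u ≠ hub)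

lemma finset_ne_elem {S : Type*} {a b : Finset S} (h : a ≠ b) :
    ∃ x, (x ∈ a ∧ x ∉ b) ∨ (x ∈ b ∧ x ∉ a) := by
  by_contra hc
  push_neg at hc
  refine h (Finset.ext fun x => ⟨fun hx => ?_, fun hx => ?_⟩)
  · exact (hc x).1 hx
  · exact (hc x).2 hx

lemma trace_lemma {ι S : Type*} [DecidableEq ι] [DecidableEq S] (r : ℕ) :
    ∀ (J : Finset ι) (A : ι → Finset S), (J.image A).card ≤ r + 1 →
    ∃ T : Finset S, T.card ≤ r ∧
      (∀ t ∈ T, ∃ j ∈ J, ∃ k ∈ J, t ∈ A j ∧ t ∉ A k) ∧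
      (∀ j ∈ J, ∀ k ∈ J, A j ≠ A k → A j ∩ T ≠ A k ∩ T) := by
  induction r using Nat.strong_induction_on with
  | _ r ih =>
  intro J A hJ
  by_cases h1 : (J.image A).card ≤ 1
  · refine ⟨∅, by simp, by simp, fun j hj k hk hne => ?_⟩
    exact absurd (Finset.card_le_one.mp h1 _ (Finset.mem_image_of_mem A hj) _
      (Finset.mem_image_of_mem A hk)) hne
  push_neg at h1
  obtain ⟨B1, hB1, B2, hB2, hB12⟩ := Finset.one_lt_card.mp h1
  obtain ⟨ja, hja, rfl⟩ := Finset.mem_image.mp hB1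
  obtain ⟨jb, hjb, rfl⟩ := Finset.mem_image.mp hB2
  obtain ⟨s0, hs0⟩ := finset_ne_elem hB12
  -- normalize so that s0 ∈ A j0 \ A k0
  obtain ⟨j0, k0, hj0, hk0, hs0j, hs0k⟩ :
      ∃ j0 k0, j0 ∈ J ∧ k0 ∈ J ∧ s0 ∈ A j0 ∧ s0 ∉ A k0 := by
    rcases hs0 with ⟨h, h'⟩ | ⟨h, h'⟩
    · exact ⟨ja, jb, hja, hjb, h, h'⟩
    · exact ⟨jb, ja, hjb, hja, h, h'⟩
  set J1 := J.filter (fun j => s0 ∈ A j) with hJ1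
  set J0 := J.filter (fun j => s0 ∉ A j) with hJ0
  have hdisj : Disjoint (J1.image A) (J0.image A) := by
    rw [Finset.disjoint_left]
    rintro B hB hB'
    obtain ⟨j, hj, rfl⟩ := Finset.mem_image.mp hB
    obtain ⟨k, hk, hAk⟩ := Finset.mem_image.mp hB'
    rw [Finset.mem_filter] at hj hk
    rw [hAk] at hk
    exact hk.2 hj.2
  have hunion : J1.image A ∪ J0.image A = J.image A := by
    rw [← Finset.image_union, Finset.filter_union_filter_not_eq]
  have hsum : (J1.image A).card + (J0.image A).card = (J.image A).card := by
    rw [← Finset.card_union_of_disjoint hdisj, hunion]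
  have hc1 : 1 ≤ (J1.image A).card :=
    Finset.card_pos.mpr ⟨A j0, Finset.mem_image_of_mem A (Finset.mem_filter.mpr ⟨hj0, hs0j⟩)⟩
  have hc0 : 1 ≤ (J0.image A).card :=
    Finset.card_pos.mpr ⟨A k0, Finset.mem_image_of_mem A (Finset.mem_filter.mpr ⟨hk0, hs0k⟩)⟩
  obtain ⟨T1, hT1card, hT1supp, hT1tr⟩ :=
    ih ((J1.image A).card - 1) (by omega) J1 A (by omega)
  obtain ⟨T0, hT0card, hT0supp, hT0tr⟩ :=
    ih ((J0.image A).card - 1) (by omega) J0 A (by omega)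
  refine ⟨insert s0 (T1 ∪ T0), ?_, ?_, ?_⟩
  · calc (insert s0 (T1 ∪ T0)).card ≤ (T1 ∪ T0).card + 1 := Finset.card_insert_le _ _
      _ ≤ T1.card + T0.card + 1 := by gcongr; exact Finset.card_union_le _ _
      _ ≤ r := by omega
  · intro t ht
    rcases Finset.mem_insert.mp ht with rfl | ht
    · exact ⟨j0, hj0, k0, hk0, hs0j, hs0k⟩
    rcases Finset.mem_union.mp ht with ht | ht
    · obtain ⟨j, hj, k, hk, h⟩ := hT1supp t ht
      exact ⟨j, (Finset.mem_filter.mp hj).1, k, (Finset.mem_filter.mp hk).1, h⟩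
    · obtain ⟨j, hj, k, hk, h⟩ := hT0supp t ht
      exact ⟨j, (Finset.mem_filter.mp hj).1, k, (Finset.mem_filter.mp hk).1, h⟩
  · intro j hj k hk hne heq
    by_cases hjs : s0 ∈ A j <;> by_cases hks : s0 ∈ A k
    · refine hT1tr j (Finset.mem_filter.mpr ⟨hj, hjs⟩) k (Finset.mem_filter.mpr ⟨hk, hks⟩) hne ?_
      ext x
      simp only [Finset.mem_inter]
      constructor
      · rintro ⟨hxa, hxt⟩
        have : x ∈ A j ∩ insert s0 (T1 ∪ T0) :=
          Finset.mem_inter.mpr ⟨hxa, Finset.mem_insert_of_mem (Finset.mem_union_left _ hxt)⟩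
        rw [heq] at this
        exact ⟨(Finset.mem_inter.mp this).1, hxt⟩
      · rintro ⟨hxa, hxt⟩
        have : x ∈ A k ∩ insert s0 (T1 ∪ T0) :=
          Finset.mem_inter.mpr ⟨hxa, Finset.mem_insert_of_mem (Finset.mem_union_left _ hxt)⟩
        rw [← heq] at this
        exact ⟨(Finset.mem_inter.mp this).1, hxt⟩
    · have : s0 ∈ A k ∩ insert s0 (T1 ∪ T0) := by
        rw [← heq]; exact Finset.mem_inter.mpr ⟨hjs, Finset.mem_insert_self _ _⟩
      exact hks (Finset.mem_inter.mp this).1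
    · have : s0 ∈ A j ∩ insert s0 (T1 ∪ T0) := by
        rw [heq]; exact Finset.mem_inter.mpr ⟨hks, Finset.mem_insert_self _ _⟩
      exact hjs (Finset.mem_inter.mp this).1
    · refine hT0tr j (Finset.mem_filter.mpr ⟨hj, hjs⟩) k (Finset.mem_filter.mpr ⟨hk, hks⟩) hne ?_
      ext x
      simp only [Finset.mem_inter]
      constructor
      · rintro ⟨hxa, hxt⟩
        have : x ∈ A j ∩ insert s0 (T1 ∪ T0) :=
          Finset.mem_inter.mpr ⟨hxa, Finset.mem_insert_of_mem (Finset.mem_union_right _ hxt)⟩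
        rw [heq] at this
        exact ⟨(Finset.mem_inter.mp this).1, hxt⟩
      · rintro ⟨hxa, hxt⟩
        have : x ∈ A k ∩ insert s0 (T1 ∪ T0) :=
          Finset.mem_inter.mpr ⟨hxa, Finset.mem_insert_of_mem (Finset.mem_union_right _ hxt)⟩
        rw [← heq] at this
        exact ⟨(Finset.mem_inter.mp this).1, hxt⟩



lemma lid_transport {V C : Type*} {k : ℕ} (G : SimpleGraph V) (c : V → C) (f : C → Fin k)

    (hf : Set.InjOn f (Set.range c)) (hc : IsLidColoring G c) : IsLidColoring G (f ∘ c) := by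

  obtain ⟨h1, h2⟩ := hc

  have key : ∀ X Y : Set V, (f ∘ c) '' X = (f ∘ c) '' Y → c '' X = c '' Y := by

    intro X Y hXY

    have sub : ∀ X Y : Set V, (f ∘ c) '' X = (f ∘ c) '' Y → c '' X ⊆ c '' Y := by

      rintro X Y hXY _ ⟨x, hx, rfl⟩

      have : (f ∘ c) x ∈ (f ∘ c) '' Y := hXY ▸ ⟨x, hx, rfl⟩

      obtain ⟨y, hy, hfy⟩ := this

      exact ⟨y, hy, hf ⟨y, rfl⟩ ⟨x, rfl⟩ hfy⟩

    exact le_antisymm (sub X Y hXY) (sub Y X hXY.symm)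

  constructor

  · intro u v huv hEq

    exact h1 huv (hf ⟨u, rfl⟩ ⟨v, rfl⟩ hEq)

  · intro u v huv hne hEq

    exact h2 huv hne (key _ _ hEq)



lemma clique_adj {V : Type*} {G : SimpleGraph V} {C : Finset V} (h : G.IsClique ↑C)

    (h2 : 2 ≤ C.card) : ∃ u ∈ C, ∃ v ∈ C, G.Adj u v := by

  obtain ⟨u, hu, v, hv, huv⟩ := Finset.one_lt_card.mp h2

  exact ⟨u, hu, v, hv, h hu hv huv⟩



lemma exists_good_partition {V : Type*} [Fintype V] (G : SimpleGraph V) (hsplit : IsSplit G) :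

    ∃ K : Finset V, G.IsClique ↑K ∧ (∀ u v : V, u ∉ K → v ∉ K → ¬ G.Adj u v) ∧

      K.card = G.cliqueNum := by

  classical

  set F : Finset (Finset V) := Finset.univ.filter

    (fun K => G.IsClique ↑K ∧ ∀ u v : V, u ∉ K → v ∉ K → ¬ G.Adj u v) with hF

  have hFne : F.Nonempty := by

    obtain ⟨K, hc, hi⟩ := hsplit

    refine ⟨(Set.toFinite K).toFinset, Finset.mem_filter.mpr ⟨Finset.mem_univ _, ?_, ?_⟩⟩

    · rwa [Set.Finite.coe_toFinset]

    · intro u v hu hv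

      rw [Set.Finite.mem_toFinset] at hu hv

      exact hi hu hv

  obtain ⟨K, hKF, hKmax⟩ := F.exists_max_image Finset.card hFne

  rw [hF, Finset.mem_filter] at hKF

  obtain ⟨-, hKc, hKi⟩ := hKF

  refine ⟨K, hKc, hKi, ?_⟩

  have hle : K.card ≤ G.cliqueNum := IsClique.card_le_cliqueNum (tc := hKc)

  by_contra hne

  have hlt : K.card < G.cliqueNum := lt_of_le_of_ne hle (fun h => hne (h ▸ rfl))

  obtain ⟨C, hC⟩ := G.exists_isNClique_cliqueNum

  have hCcard : C.card = G.cliqueNum := hC.card_eq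

  have hCK : (C \ K).card ≤ 1 := by

    by_contra h2

    push_neg at h2

    obtain ⟨u, hu, v, hv, huv⟩ := Finset.one_lt_card.mp h2

    rw [Finset.mem_sdiff] at hu hv

    exact hKi u v hu.2 hv.2 (hC.isClique hu.1 hv.1 huv)

  have hsplitcard : (C ∩ K).card + (C \ K).card = C.card := Finset.card_inter_add_card_sdiff C K

  have hCKle : (C ∩ K).card ≤ K.card := Finset.card_le_card (Finset.inter_subset_right)

  have heq : (C ∩ K).card = K.card := by omega

  have hsub : K ⊆ C := by

    have : C ∩ K = K := Finset.eq_of_subset_of_card_le Finset.inter_subset_right (le_of_eq heq.symm)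

    intro x hx

    rw [← this] at hx

    exact Finset.mem_inter.mp hx |>.1

  have hCF : C ∈ F := by

    rw [hF, Finset.mem_filter]

    exact ⟨Finset.mem_univ _, hC.isClique, fun u v hu hv =>

      hKi u v (fun h => hu (hsub h)) (fun h => hv (hsub h))⟩

  have := hKmax C hCF

  omega

lemma star_case {V : Type*} [Fintype V] (G : SimpleGraph V) (hstar : IsStar G) :
    LidColorable G (2 * G.cliqueNum - 1) := by
  classical
  obtain ⟨h, hh⟩ := hstar
  have hcl1 : (1 : ℕ) ≤ G.cliqueNum := by
    have : G.IsClique ({h} : Finset V) := by simp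
    have := IsClique.card_le_cliqueNum (tc := this)
    simpa using this
  by_cases hleaf : ∃ v : V, v ≠ h
  · -- at least one leaf
    obtain ⟨l0, hl0⟩ := hleaf
    have hadjh : ∀ v : V, v ≠ h → G.Adj h v := fun v hv => (hh h v).mpr (Or.inl ⟨rfl, hv⟩)
    have hadj' : ∀ u v : V, G.Adj u v → u ≠ h → v = h := by
      intro u v ha hu
      rcases (hh u v).mp ha with ⟨h1, _⟩ | ⟨h1, _⟩
      · exact absurd h1 hu
      · exact h1
    have hcl2 : G.cliqueNum = 2 := by
      have hge : 2 ≤ G.cliqueNum := by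
        have hcl : G.IsClique ({h, l0} : Finset V) := by
          intro a ha b hb hab
          simp only [Finset.coe_insert, Finset.coe_singleton, Set.mem_insert_iff,
            Set.mem_singleton_iff] at ha hb
          rcases ha with rfl | rfl <;> rcases hb with rfl | rfl
          · exact absurd rfl hab
          · exact hadjh _ hl0
          · exact (hadjh _ hl0).symm
          · exact absurd rfl hab
        have := IsClique.card_le_cliqueNum (tc := hcl)
        rwa [Finset.card_insert_of_notMem (by simp [Ne.symm hl0]), Finset.card_singleton] at this
      have hle : G.cliqueNum ≤ 2 := by
        by_contra hgt
        push_neg at hgt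
        obtain ⟨C, hC⟩ := G.exists_isNClique_cliqueNum
        have h3 : 2 < C.card := hC.card_eq.symm ▸ hgt
        obtain ⟨a, b, c, ha, hb, hc, hab, hac, hbc⟩ := Finset.two_lt_card_iff.mp h3
        -- two of a,b,c differ from h
        obtain ⟨x, y, hx, hy, hxy, hxh, hyh⟩ :
            ∃ x y, x ∈ C ∧ y ∈ C ∧ x ≠ y ∧ x ≠ h ∧ y ≠ h := by
          by_cases h1 : a = h
          · exact ⟨b, c, hb, hc, hbc, fun e => hab (h1 ▸ e ▸ rfl), fun e => hac (h1 ▸ e ▸ rfl)⟩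
          · by_cases h2 : b = h
            · exact ⟨a, c, ha, hc, hac, h1, fun e => hbc (h2 ▸ e ▸ rfl)⟩
            · exact ⟨a, b, ha, hb, hab, h1, h2⟩
        exact hyh (hadj' x y (hC.isClique hx hy hxy) hxh)
      omega
    rw [hcl2]
    have h3 : (2 * 2 - 1 : ℕ) = 3 := rfl
    rw [h3]
    -- the coloring
    refine ⟨fun v => if v = h then 0 else if v = l0 then 2 else 1, ?_, ?_⟩
    · intro u v huv
      rcases (hh u v).mp huv with ⟨rfl, hv⟩ | ⟨rfl, hu⟩
      · simp only [if_pos rfl, if_neg hv]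
        split_ifs <;> decide
      · simp only [if_pos rfl, if_neg hu]
        split_ifs <;> decide
    · -- lid condition
      have hcnh : closedNbhd G h = Set.univ := by
        ext x
        simp only [closedNbhd, Set.mem_insert_iff, mem_neighborSet, Set.mem_univ, iff_true]
        by_cases hx : x = h
        · exact Or.inl hx
        · exact Or.inr (hadjh x hx)
      have hcnv : ∀ v : V, v ≠ h → closedNbhd G v = {v, h} := by
        intro v hv
        ext x
        simp only [closedNbhd, Set.mem_insert_iff, mem_neighborSet, Set.mem_singleton_iff]
        constructor
        · rintro (rfl | hx)
          · exact Or.inl rfl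
          · exact Or.inr (hadj' v x hx hv)
        · rintro (rfl | rfl)
          · exact Or.inl rfl
          · exact Or.inr (hadjh v hv).symm
      set c : V → Fin 3 := fun v => if v = h then 0 else if v = l0 then 2 else 1 with hcdef
      have main : ∀ v : V, v ≠ h → closedNbhd G h ≠ closedNbhd G v →
          c '' closedNbhd G h ≠ c '' closedNbhd G v := by
        intro v hv hne
        rw [hcnh, hcnv v hv]
        rw [hcnh, hcnv v hv] at hne
        -- get a third vertex
        have : ∃ w : V, w ≠ v ∧ w ≠ h := by
          by_contra hcon
          push_neg at hcon
          apply hne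
          ext x
          simp only [Set.mem_univ, Set.mem_insert_iff, Set.mem_singleton_iff, true_iff]
          by_cases hxv : x = v
          · exact Or.inl hxv
          · exact Or.inr (hcon x hxv)
        obtain ⟨w, hwv, hwh⟩ := this
        have himg : c '' ({v, h} : Set V) = {c v, 0} := by
          rw [Set.image_pair]
          simp [hcdef]
        rw [himg]
        by_cases hvl : v = l0
        · -- c v = 2, use w with color 1
          have hwl : w ≠ l0 := hvl ▸ hwv
          have h1mem : (1 : Fin 3) ∈ c '' Set.univ := ⟨w, trivial, by simp [hcdef, hwh, hwl]⟩
          intro hEq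
          rw [hEq] at h1mem
          simp only [Set.mem_insert_iff, Set.mem_singleton_iff, hcdef] at h1mem
          rcases h1mem with h1 | h1
          · rw [if_neg hv, if_pos hvl] at h1; exact absurd h1 (by decide)
          · exact absurd h1 (by decide)
        · -- c v = 1, use l0 with color 2
          have h2mem : (2 : Fin 3) ∈ c '' Set.univ := ⟨l0, trivial, by simp [hcdef, hl0]⟩
          intro hEq
          rw [hEq] at h2mem
          simp only [Set.mem_insert_iff, Set.mem_singleton_iff, hcdef] at h2mem
          rcases h2mem with h1 | h1
          · rw [if_neg hv, if_neg hvl] at h1; exact absurd h1 (by decide)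
          · exact absurd h1 (by decide)
      intro u v huv hne
      rcases (hh u v).mp huv with ⟨rfl, hv⟩ | ⟨rfl, hu⟩
      · exact main v hv hne
      · exact (main u hu hne.symm).symm
  · -- no leaf: single vertex, no edges
    push_neg at hleaf
    have hadj : ∀ u v : V, ¬ G.Adj u v := by
      intro u v ha
      rcases (hh u v).mp ha with ⟨_, hv⟩ | ⟨_, hu⟩
      · exact hv (hleaf v)
      · exact hu (hleaf u)
    refine ⟨fun _ => ⟨0, by omega⟩, fun u v huv => absurd huv (hadj u v),
      fun u v huv => absurd huv (hadj u v)⟩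

lemma main_case {V : Type*} [Fintype V] (G : SimpleGraph V) (K : Finset V)
    (hKc : G.IsClique ↑K) (hInd : ∀ u v : V, u ∉ K → v ∉ K → ¬ G.Adj u v)
    (hcard : K.card = G.cliqueNum) (hw : 3 ≤ K.card) :
    LidColorable G (2 * K.card - 1) := by
  classical
  have hadjK : ∀ u ∈ K, ∀ v ∈ K, u ≠ v → G.Adj u v := fun u hu v hv hne =>
    hKc (Finset.mem_coe.mpr hu) (Finset.mem_coe.mpr hv) hne
  set Miss : V → Finset V := fun s => K.filter (fun w => ¬ G.Adj s w) with hMissdef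
  have hMissMem : ∀ s w : V, w ∈ Miss s ↔ w ∈ K ∧ ¬ G.Adj s w := by
    intro s w; simp [hMissdef]
  have hMissNe : ∀ s, s ∉ K → (Miss s).Nonempty := by
    intro s hs
    by_contra hcon
    rw [Finset.not_nonempty_iff_eq_empty] at hcon
    have hall : ∀ w ∈ K, G.Adj s w := by
      intro w hw'
      by_contra hna
      have : w ∈ Miss s := (hMissMem s w).mpr ⟨hw', hna⟩
      simp [hcon] at this
    have hclique : G.IsClique ↑(insert s K) := by
      rw [Finset.coe_insert]
      refine hKc.insert ?_
      intro b hb hbs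
      exact hall b (Finset.mem_coe.mp hb)
    have hle := SimpleGraph.IsClique.card_le_cliqueNum (tc := hclique)
    rw [Finset.card_insert_of_notMem hs] at hle
    omega
  set A : V → Finset V := fun w => Finset.univ.filter (fun s => s ∉ K ∧ G.Adj w s) with hAdef
  have hAMem : ∀ w s : V, s ∈ A w ↔ s ∉ K ∧ G.Adj w s := by
    intro w s; simp [hAdef]
  set M : Finset V := K.filter (fun w => ∃ s, s ∉ K ∧ Miss s = {w}) with hMdef
  have hMMem : ∀ w : V, w ∈ M ↔ w ∈ K ∧ ∃ s, s ∉ K ∧ Miss s = {w} := by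
    intro w; simp [hMdef]
  have hKne : K.Nonempty := Finset.card_pos.mp (by omega)
  obtain ⟨istar, histarK, histarM⟩ :
      ∃ i, i ∈ K ∧ (M ≠ K → i ∉ M) := by
    by_cases hMK : M = K
    · exact ⟨hKne.choose, hKne.choose_spec, fun h => absurd hMK h⟩
    · have hMsub : M ⊆ K := Finset.filter_subset _ _
      have : (K \ M).Nonempty := by
        rw [Finset.sdiff_nonempty]
        intro hsub
        exact hMK (Finset.Subset.antisymm hMsub hsub)
      obtain ⟨i, hi⟩ := this
      rw [Finset.mem_sdiff] at hi
      exact ⟨i, hi.1, fun _ => hi.2⟩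
  set J : Finset V := K \ (M.erase istar) with hJdef
  have histarJ : istar ∈ J := by
    rw [hJdef, Finset.mem_sdiff]
    exact ⟨histarK, fun h => (Finset.mem_erase.mp h).1 rfl⟩
  have hJK : J ⊆ K := Finset.sdiff_subset
  have hJcard : (J.erase istar).card = J.card - 1 := Finset.card_erase_of_mem histarJ
  have hJpos : 1 ≤ J.card := Finset.card_pos.mpr ⟨istar, histarJ⟩
  obtain ⟨T, hTcard, hTsupp, hTtr⟩ := trace_lemma (S := V) (ι := V) ((J.erase istar).card) J A
    (by
      have := Finset.card_image_le (s := J) (f := A)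
      omega)
  -- T avoids forced vertices
  have hTgood : ∀ t ∈ T, t ∉ K ∧ ¬ ∃ w, Miss t = {w} := by
    intro t ht
    obtain ⟨j, hj, k, hk, htj, htk⟩ := hTsupp t ht
    have htK : t ∉ K := ((hAMem j t).mp htj).1
    refine ⟨htK, ?_⟩
    rintro ⟨w, hwMiss⟩
    have hkK : k ∈ K := hJK hk
    have hnadj : ¬ G.Adj k t := by
      intro hadj
      exact htk ((hAMem k t).mpr ⟨htK, hadj⟩)
    have hkMiss : k ∈ Miss t := (hMissMem t k).mpr ⟨hkK, fun h => hnadj h.symm⟩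
    rw [hwMiss, Finset.mem_singleton] at hkMiss
    subst hkMiss
    have hkM : k ∈ M := (hMMem k).mpr ⟨hkK, t, htK, hwMiss⟩
    rw [hJdef, Finset.mem_sdiff] at hk
    have hkistar : k = istar := by
      by_contra hne
      exact hk.2 (Finset.mem_erase.mpr ⟨hne, hkM⟩)
    have histarM2 : istar ∈ M := hkistar ▸ hkM
    have hMK : M = K := by
      by_contra hne
      exact (histarM hne) histarM2
    have hJsing : J.erase istar = ∅ := by
      rw [Finset.eq_empty_iff_forall_notMem]
      intro x hx
      rw [Finset.mem_erase, hJdef, Finset.mem_sdiff] at hx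
      obtain ⟨hxi, hxK, hxM⟩ := hx
      exact hxM (Finset.mem_erase.mpr ⟨hxi, hMK ▸ hxK⟩)
    rw [hJsing, Finset.card_empty, Nat.le_zero, Finset.card_eq_zero] at hTcard
    rw [hTcard] at ht
    simp at ht
  -- the injection τ from T into J.erase istar
  have hτcard : T.card ≤ (J.erase istar).card := hTcard
  obtain ⟨τ, hτinj, hτmaps⟩ :
      ∃ τ : V → V, Set.InjOn τ ↑T ∧ ∀ t ∈ T, τ t ∈ J.erase istar := by
    have hle : T.card ≤ (J.erase istar).card := hτcard
    refine ⟨fun x => if hx : x ∈ T then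
      ((J.erase istar).equivFin.symm (Fin.castLE hle (T.equivFin ⟨x, hx⟩)) : V) else x, ?_, ?_⟩
    · intro x hx y hy hxy
      rw [Finset.mem_coe] at hx hy
      dsimp only at hxy
      rw [dif_pos hx, dif_pos hy] at hxy
      have h1 := Subtype.coe_injective hxy
      have h2 := (J.erase istar).equivFin.symm.injective h1
      have h3 := Fin.castLE_injective hle h2
      have h4 := T.equivFin.injective h3
      exact congrArg Subtype.val h4
    · intro t ht
      dsimp only
      rw [dif_pos ht]
      exact ((J.erase istar).equivFin.symm _).2
  set pick : V → V := fun s => if h : (Miss s).Nonempty then h.choose else s with hpickdef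
  have hpick : ∀ s : V, (Miss s).Nonempty → pick s ∈ Miss s := by
    intro s hs
    simp only [hpickdef, dif_pos hs]
    exact hs.choose_spec
  -- the coloring
  set c : V → V ⊕ V := fun x =>
    if x ∈ K then Sum.inl x
    else if Miss x = {istar} then Sum.inl istar
    else if hf : ∃ w, Miss x = {w} then Sum.inr hf.choose
    else if x ∈ T then Sum.inr (τ x)
    else Sum.inl (pick x) with hcdef
  have E1 : ∀ w ∈ K, c w = Sum.inl w := by
    intro w hw'
    simp only [hcdef]
    rw [if_pos hw']
  have E2 : ∀ s, s ∉ K → Miss s = {istar} → c s = Sum.inl istar := by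
    intro s hs h2
    simp only [hcdef]
    rw [if_neg hs, if_pos h2]
  have E3 : ∀ s x, s ∉ K → x ≠ istar → Miss s = {x} → c s = Sum.inr x := by
    intro s x hs hxi h3
    have h2 : ¬ (Miss s = {istar}) := by
      intro h
      rw [h3] at h
      exact hxi (Finset.singleton_injective h)
    have hf : ∃ w, Miss s = {w} := ⟨x, h3⟩
    simp only [hcdef]
    rw [if_neg hs, if_neg h2, dif_pos hf]
    have h4 : ({x} : Finset V) = {hf.choose} := h3.symm.trans hf.choose_spec
    exact congrArg Sum.inr (Finset.singleton_injective h4).symm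
  have E4 : ∀ t, t ∉ K → (¬ ∃ w, Miss t = {w}) → t ∈ T → c t = Sum.inr (τ t) := by
    intro t ht hf htT
    have h2 : ¬ (Miss t = {istar}) := fun h => hf ⟨istar, h⟩
    simp only [hcdef]
    rw [if_neg ht, if_neg h2, dif_neg hf, if_pos htT]
  have E5 : ∀ s, s ∉ K → (¬ ∃ w, Miss s = {w}) → s ∉ T → c s = Sum.inl (pick s) := by
    intro s hs hf hsT
    have h2 : ¬ (Miss s = {istar}) := fun h => hf ⟨istar, h⟩
    simp only [hcdef]
    rw [if_neg hs, if_neg h2, dif_neg hf, if_neg hsT]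
  -- inversion for inr colors
  have hInrInv : ∀ y x : V, c y = Sum.inr x →
      y ∉ K ∧ (Miss y = {x} ∨ (y ∈ T ∧ τ y = x ∧ ¬ ∃ w, Miss y = {w})) := by
    intro y x h
    simp only [hcdef] at h
    by_cases h1 : y ∈ K
    · rw [if_pos h1] at h; exact absurd h (by simp)
    rw [if_neg h1] at h
    refine ⟨h1, ?_⟩
    by_cases h2 : Miss y = {istar}
    · rw [if_pos h2] at h; exact absurd h (by simp)
    rw [if_neg h2] at h
    by_cases h3 : ∃ w, Miss y = {w}
    · rw [dif_pos h3] at h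
      have := Sum.inr.inj h
      exact Or.inl (this ▸ h3.choose_spec)
    rw [dif_neg h3] at h
    by_cases h4 : y ∈ T
    · rw [if_pos h4] at h
      exact Or.inr ⟨h4, Sum.inr.inj h, h3⟩
    · rw [if_neg h4] at h; exact absurd h (by simp)
  -- closed neighborhoods of clique vertices
  have hNset : ∀ w ∈ K, closedNbhd G w = ↑K ∪ ↑(A w) := by
    intro w hw'
    ext x
    simp only [closedNbhd, Set.mem_insert_iff, SimpleGraph.mem_neighborSet, Set.mem_union,
      Finset.mem_coe]
    rw [hAMem]
    constructor
    · rintro (rfl | hadj)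
      · exact Or.inl hw'
      · by_cases hx : x ∈ K
        · exact Or.inl hx
        · exact Or.inr ⟨hx, hadj⟩
    · rintro (hx | ⟨hx, hadj⟩)
      · by_cases hxw : x = w
        · exact Or.inl hxw
        · exact Or.inr (hadjK w hw' x hx (fun h => hxw h.symm))
      · exact Or.inr hadj
  -- membership lemma: clique colors in clique neighborhoods
  have hInlK : ∀ w ∈ K, ∀ w0 ∈ K, Sum.inl w0 ∈ c '' closedNbhd G w := by
    intro w hw' w0 hw0
    refine ⟨w0, ?_, E1 w0 hw0⟩
    rw [hNset w hw']
    exact Or.inl (Finset.mem_coe.mpr hw0)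
  -- sigma colors: inr x for x ∈ M, x ≠ istar
  have Lsigma : ∀ x, x ∈ M → x ≠ istar → ∀ w ∈ K,
      (Sum.inr x ∈ c '' closedNbhd G w ↔ x ≠ w) := by
    intro x hxM hxi w hw'
    constructor
    · rintro ⟨y, hy, hcy⟩
      rw [hNset w hw'] at hy
      obtain ⟨hyK, hor⟩ := hInrInv y x hcy
      have hyA : y ∈ A w := by
        rcases hy with hy | hy
        · exact absurd (Finset.mem_coe.mp hy) hyK
        · exact Finset.mem_coe.mp hy
      rcases hor with hMiss | ⟨hyT, hτy, _⟩
      · -- forced, Miss y = {x}; w adjacent to y so w ∉ Miss y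
        have hadj : G.Adj w y := ((hAMem w y).mp hyA).2
        intro hne
        subst hne
        have : x ∈ Miss y := by rw [hMiss]; exact Finset.mem_singleton_self x
        exact ((hMissMem y x).mp this).2 hadj.symm
      · -- tau color, but τ y ∉ M
        exfalso
        have := hτmaps y hyT
        rw [hτy] at this
        rw [Finset.mem_erase, hJdef, Finset.mem_sdiff] at this
        exact this.2.2 (Finset.mem_erase.mpr ⟨this.1, hxM⟩)
    · intro hxw
      obtain ⟨-, s, hsK, hsMiss⟩ := (hMMem x).mp hxM
      refine ⟨s, ?_, E3 s x hsK hxi hsMiss⟩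
      rw [hNset w hw']
      refine Or.inr (Finset.mem_coe.mpr ((hAMem w s).mpr ⟨hsK, ?_⟩))
      have hwMiss : w ∉ Miss s := by
        rw [hsMiss, Finset.mem_singleton]
        exact fun h => hxw h.symm
      rw [hMissMem] at hwMiss
      push_neg at hwMiss
      exact (hwMiss hw').symm
  -- tau colors
  have Ltau : ∀ x ∈ J.erase istar, ∀ w ∈ K,
      (Sum.inr x ∈ c '' closedNbhd G w ↔ ∃ t, t ∈ T ∧ τ t = x ∧ t ∈ A w) := by
    intro x hxE w hw'
    constructor
    · rintro ⟨y, hy, hcy⟩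
      rw [hNset w hw'] at hy
      obtain ⟨hyK, hor⟩ := hInrInv y x hcy
      have hyA : y ∈ A w := by
        rcases hy with hy | hy
        · exact absurd (Finset.mem_coe.mp hy) hyK
        · exact Finset.mem_coe.mp hy
      rcases hor with hMiss | ⟨hyT, hτy, _⟩
      · exfalso
        have hxM : x ∈ M := by
          rw [hMMem]
          refine ⟨?_, y, hyK, hMiss⟩
          have : x ∈ Miss y := by rw [hMiss]; exact Finset.mem_singleton_self x
          exact ((hMissMem y x).mp this).1
        rw [Finset.mem_erase, hJdef, Finset.mem_sdiff] at hxE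
        exact hxE.2.2 (Finset.mem_erase.mpr ⟨hxE.1, hxM⟩)
      · exact ⟨y, hyT, hτy, hyA⟩
    · rintro ⟨t, htT, hτt, htA⟩
      obtain ⟨htK, htf⟩ := hTgood t htT
      refine ⟨t, ?_, by rw [E4 t htK htf htT, hτt]⟩
      rw [hNset w hw']
      exact Or.inr (Finset.mem_coe.mpr htA)
  -- colors not in c '' closedNbhd of an independent vertex
  have hNotMemS : ∀ s, s ∉ K → ∀ col : V ⊕ V, col ≠ c s →
      (∀ y ∈ K, G.Adj s y → col ≠ Sum.inl y) → col ∉ c '' closedNbhd G s := by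
    rintro s hs col h1 h2 ⟨y, hy, hcy⟩
    simp only [closedNbhd, Set.mem_insert_iff, SimpleGraph.mem_neighborSet] at hy
    rcases hy with rfl | hy'
    · exact h1 hcy.symm
    · have hyK : y ∈ K := by
        by_contra hyK
        exact hInd s y hs hyK hy'
      exact h2 y hyK hy' (hcy.symm.trans (E1 y hyK))
  -- the key K-S lemma
  have hKS : ∀ w ∈ K, ∀ s, s ∉ K → G.Adj w s →
      c '' closedNbhd G s ≠ c '' closedNbhd G w := by
    intro w hw' s hs hadj
    by_cases h2 : Miss s = {istar}
    · -- c s = inl istar; istar ∈ M so M = K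
      have histarM' : istar ∈ M := (hMMem istar).mpr ⟨histarK, s, hs, h2⟩
      have hMK : M = K := by
        by_contra hne
        exact (histarM hne) histarM'
      -- find x ∈ K, x ≠ istar, x ≠ w
      obtain ⟨x, hxK, hxi, hxw⟩ : ∃ x ∈ K, x ≠ istar ∧ x ≠ w := by
        have hsub : (K \ {istar, w}).Nonempty := by
          have h1 := Finset.le_card_sdiff ({istar, w} : Finset V) K
          have h2' : ({istar, w} : Finset V).card ≤ 2 := by
            refine (Finset.card_insert_le _ _).trans ?_
            simp
          rw [← Finset.card_pos]
          omega
        obtain ⟨x, hx⟩ := hsub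
        rw [Finset.mem_sdiff, Finset.mem_insert, Finset.mem_singleton] at hx
        push_neg at hx
        exact ⟨x, hx.1, hx.2.1, hx.2.2⟩
      have hxM : x ∈ M := by rw [hMK]; exact hxK
      intro hEq
      have hmem : Sum.inr x ∈ c '' closedNbhd G w := (Lsigma x hxM hxi w hw').mpr hxw
      rw [← hEq] at hmem
      refine hNotMemS s hs (Sum.inr x) ?_ ?_ hmem
      · rw [E2 s hs h2]; simp
      · intro y _ _; simp
    · by_cases hinr : ∃ x, c s = Sum.inr x
      · obtain ⟨x, hcs⟩ := hinr
        obtain ⟨w0, hw0⟩ := hMissNe s hs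
        have hw0K : w0 ∈ K := ((hMissMem s w0).mp hw0).1
        intro hEq
        have hmem : Sum.inl w0 ∈ c '' closedNbhd G w := hInlK w hw' w0 hw0K
        rw [← hEq] at hmem
        refine hNotMemS s hs (Sum.inl w0) ?_ ?_ hmem
        · rw [hcs]; simp
        · intro y hyK hadjy hEq'
          have : w0 = y := Sum.inl.inj hEq'
          subst this
          exact ((hMissMem s w0).mp hw0).2 hadjy
      · -- c s = inl (pick s), Miss s has ≥ 2 elements
        have hf : ¬ ∃ x, Miss s = {x} := by
          rintro ⟨x, hx⟩
          by_cases hxi : x = istar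
          · exact h2 (hxi ▸ hx)
          · exact hinr ⟨x, E3 s x hs hxi hx⟩
        have hsT : s ∉ T := by
          intro hsT
          exact hinr ⟨τ s, E4 s hs hf hsT⟩
        have hcs : c s = Sum.inl (pick s) := E5 s hs hf hsT
        have hpickmem : pick s ∈ Miss s := hpick s (hMissNe s hs)
        -- second element of Miss s
        obtain ⟨w2, hw2⟩ : ((Miss s).erase (pick s)).Nonempty := by
          rw [← Finset.card_pos, Finset.card_erase_of_mem hpickmem]
          have hcard1 : (Miss s).card ≠ 1 := by
            intro h
            exact hf (Finset.card_eq_one.mp h)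
          have := Finset.card_pos.mpr (hMissNe s hs)
          omega
        rw [Finset.mem_erase] at hw2
        have hw2K : w2 ∈ K := ((hMissMem s w2).mp hw2.2).1
        intro hEq
        have hmem : Sum.inl w2 ∈ c '' closedNbhd G w := hInlK w hw' w2 hw2K
        rw [← hEq] at hmem
        refine hNotMemS s hs (Sum.inl w2) ?_ ?_ hmem
        · rw [hcs]
          intro h
          exact hw2.1 (Sum.inl.inj h)
        · intro y hyK hadjy hEq'
          have : w2 = y := Sum.inl.inj hEq'
          subst this
          exact ((hMissMem s w2).mp hw2.2).2 hadjy
  -- the lid coloring property for c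
  have hLid : IsLidColoring G c := by
    constructor
    · -- proper
      intro u v hadj
      by_cases hu : u ∈ K <;> by_cases hv : v ∈ K
      · rw [E1 u hu, E1 v hv]
        intro h
        exact hadj.ne (Sum.inl.inj h)
      · -- u ∈ K, v ∉ K
        rw [E1 u hu]
        intro h
        -- c v = inl u with u adjacent to v
        have hcv : c v = Sum.inl u := h.symm
        simp only [hcdef] at hcv
        rw [if_neg hv] at hcv
        by_cases h2 : Miss v = {istar}
        · rw [if_pos h2] at hcv
          have : istar = u := Sum.inl.inj hcv
          subst this
          have : istar ∈ Miss v := by rw [h2]; exact Finset.mem_singleton_self _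
          exact ((hMissMem v istar).mp this).2 hadj.symm
        rw [if_neg h2] at hcv
        by_cases h3 : ∃ x, Miss v = {x}
        · rw [dif_pos h3] at hcv; exact absurd hcv (by simp)
        rw [dif_neg h3] at hcv
        by_cases h4 : v ∈ T
        · rw [if_pos h4] at hcv; exact absurd hcv (by simp)
        rw [if_neg h4] at hcv
        have : pick v = u := Sum.inl.inj hcv
        have hpm : pick v ∈ Miss v := hpick v (hMissNe v hv)
        rw [this] at hpm
        exact ((hMissMem v u).mp hpm).2 hadj.symm
      · -- u ∉ K, v ∈ K : symmetric
        rw [E1 v hv]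
        intro h
        have hcu : c u = Sum.inl v := h
        simp only [hcdef] at hcu
        rw [if_neg hu] at hcu
        by_cases h2 : Miss u = {istar}
        · rw [if_pos h2] at hcu
          have : istar = v := Sum.inl.inj hcu
          subst this
          have : istar ∈ Miss u := by rw [h2]; exact Finset.mem_singleton_self _
          exact ((hMissMem u istar).mp this).2 hadj
        rw [if_neg h2] at hcu
        by_cases h3 : ∃ x, Miss u = {x}
        · rw [dif_pos h3] at hcu; exact absurd hcu (by simp)
        rw [dif_neg h3] at hcu
        by_cases h4 : u ∈ T
        · rw [if_pos h4] at hcu; exact absurd hcu (by simp)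
        rw [if_neg h4] at hcu
        have : pick u = v := Sum.inl.inj hcu
        have hpm : pick u ∈ Miss u := hpick u (hMissNe u hu)
        rw [this] at hpm
        exact ((hMissMem u v).mp hpm).2 hadj
      · exact absurd hadj (hInd u v hu hv)
    · -- lid condition
      intro u v hadj hne
      by_cases hu : u ∈ K <;> by_cases hv : v ∈ K
      · -- both in clique
        have hAne : A u ≠ A v := by
          intro h
          exact hne (by rw [hNset u hu, hNset v hv, h])
        have key : ∀ a ∈ K, ∀ b ∈ K, ∀ x, x ∈ A a ∩ T → x ∉ A b ∩ T →
            a ∈ J → b ∈ J → c '' closedNbhd G a = c '' closedNbhd G b → False := by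
          intro a ha b hb x hxa hxb _ _ hEq
          obtain ⟨hxA, hxT⟩ := Finset.mem_inter.mp hxa
          have hτxE : τ x ∈ J.erase istar := hτmaps x hxT
          have hmem : Sum.inr (τ x) ∈ c '' closedNbhd G a :=
            (Ltau (τ x) hτxE a ha).mpr ⟨x, hxT, rfl, hxA⟩
          rw [hEq] at hmem
          obtain ⟨t', ht'T, ht'τ, ht'A⟩ := (Ltau (τ x) hτxE b hb).mp hmem
          have : t' = x := hτinj (Finset.mem_coe.mpr ht'T) (Finset.mem_coe.mpr hxT) ht'τ
          subst this
          exact hxb (Finset.mem_inter.mpr ⟨ht'A, ht'T⟩)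
        by_cases hu' : u ∈ M.erase istar
        · obtain ⟨hui, huM⟩ := Finset.mem_erase.mp hu'
          intro hEq
          have hmem : Sum.inr u ∈ c '' closedNbhd G v :=
            (Lsigma u huM hui v hv).mpr hadj.ne
          rw [← hEq] at hmem
          exact ((Lsigma u huM hui u hu).mp hmem) rfl
        by_cases hv' : v ∈ M.erase istar
        · obtain ⟨hvi, hvM⟩ := Finset.mem_erase.mp hv'
          intro hEq
          have hmem : Sum.inr v ∈ c '' closedNbhd G u :=
            (Lsigma v hvM hvi u hu).mpr (fun h => hadj.ne h.symm)
          rw [hEq] at hmem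
          exact ((Lsigma v hvM hvi v hv).mp hmem) rfl
        · have huJ : u ∈ J := by rw [hJdef, Finset.mem_sdiff]; exact ⟨hu, hu'⟩
          have hvJ : v ∈ J := by rw [hJdef, Finset.mem_sdiff]; exact ⟨hv, hv'⟩
          have htr := hTtr u huJ v hvJ hAne
          obtain ⟨x, hx⟩ := finset_ne_elem htr
          intro hEq
          rcases hx with ⟨hx1, hx2⟩ | ⟨hx1, hx2⟩
          · exact key u hu v hv x hx1 hx2 huJ hvJ hEq
          · exact key v hv u hu x hx1 hx2 hvJ huJ hEq.symm
      · -- u ∈ K, v ∉ K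
        exact (hKS u hu v hv hadj).symm
      · -- u ∉ K, v ∈ K
        exact hKS v hv u hu hadj.symm
      · exact absurd hadj (hInd u v hu hv)
  -- transport to Fin (2 * K.card - 1)
  have hEcard : (K.erase istar).card = K.card - 1 := Finset.card_erase_of_mem histarK
  set f : V ⊕ V → Fin (2 * K.card - 1) := Sum.elim
    (fun w => if h : w ∈ K then
        ⟨(K.equivFin ⟨w, h⟩ : Fin K.card).1, by
          have := (K.equivFin ⟨w, h⟩).2; omega⟩
      else ⟨0, by omega⟩)
    (fun w => if h : w ∈ K.erase istar then
        ⟨K.card + ((K.erase istar).equivFin ⟨w, h⟩ : Fin (K.erase istar).card).1, by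
          have := ((K.erase istar).equivFin ⟨w, h⟩).2; omega⟩
      else ⟨0, by omega⟩) with hfdef
  -- the range of c
  have hcR : ∀ x : V, (∃ w ∈ K, c x = Sum.inl w) ∨ (∃ w ∈ K.erase istar, c x = Sum.inr w) := by
    intro x
    by_cases h1 : x ∈ K
    · exact Or.inl ⟨x, h1, E1 x h1⟩
    by_cases h2 : Miss x = {istar}
    · exact Or.inl ⟨istar, histarK, E2 x h1 h2⟩
    by_cases h3 : ∃ w, Miss x = {w}
    · obtain ⟨w, hw'⟩ := h3
      have hwi : w ≠ istar := by
        intro h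
        exact h2 (h ▸ hw')
      have hwK : w ∈ K := by
        have : w ∈ Miss x := by rw [hw']; exact Finset.mem_singleton_self _
        exact ((hMissMem x w).mp this).1
      exact Or.inr ⟨w, Finset.mem_erase.mpr ⟨hwi, hwK⟩, E3 x w h1 hwi hw'⟩
    by_cases h4 : x ∈ T
    · refine Or.inr ⟨τ x, ?_, E4 x h1 h3 h4⟩
      have := hτmaps x h4
      rw [Finset.mem_erase] at this ⊢
      exact ⟨this.1, hJK (this.2)⟩
    · refine Or.inl ⟨pick x, ?_, E5 x h1 h3 h4⟩
      exact ((hMissMem x (pick x)).mp (hpick x (hMissNe x h1))).1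
  have hInjOn : Set.InjOn f (Set.range c) := by
    rintro a ⟨x, rfl⟩ b ⟨y, rfl⟩ hEq
    rcases hcR x with ⟨w1, hw1, hcx⟩ | ⟨w1, hw1, hcx⟩ <;>
      rcases hcR y with ⟨w2, hw2, hcy⟩ | ⟨w2, hw2, hcy⟩ <;>
      rw [hcx, hcy] at hEq ⊢
    · simp only [hfdef, Sum.elim_inl] at hEq
      rw [dif_pos hw1, dif_pos hw2] at hEq
      have h1 := congrArg Fin.val hEq
      simp only at h1
      have h2 : K.equivFin ⟨w1, hw1⟩ = K.equivFin ⟨w2, hw2⟩ := Fin.ext h1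
      have h3 := K.equivFin.injective h2
      exact congrArg (Sum.inl ∘ Subtype.val) h3
    · exfalso
      simp only [hfdef, Sum.elim_inl, Sum.elim_inr] at hEq
      rw [dif_pos hw1, dif_pos hw2] at hEq
      have h1 := congrArg Fin.val hEq
      simp only at h1
      have := (K.equivFin ⟨w1, hw1⟩).2
      omega
    · exfalso
      simp only [hfdef, Sum.elim_inl, Sum.elim_inr] at hEq
      rw [dif_pos hw1, dif_pos hw2] at hEq
      have h1 := congrArg Fin.val hEq
      simp only at h1
      have := (K.equivFin ⟨w2, hw2⟩).2
      omega
    · simp only [hfdef, Sum.elim_inr] at hEq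
      rw [dif_pos hw1, dif_pos hw2] at hEq
      have h1 := congrArg Fin.val hEq
      simp only at h1
      have h1' : ((K.erase istar).equivFin ⟨w1, hw1⟩ : ℕ)
          = ((K.erase istar).equivFin ⟨w2, hw2⟩ : ℕ) := by omega
      have h2 : (K.erase istar).equivFin ⟨w1, hw1⟩ = (K.erase istar).equivFin ⟨w2, hw2⟩ :=
        Fin.ext h1'
      have h3 := (K.erase istar).equivFin.injective h2
      exact congrArg (Sum.inr ∘ Subtype.val) h3
  exact ⟨f ∘ c, lid_transport G c f hInjOn hLid⟩

/-- A split graph `G` with `ω(G) ≥ 3`, or a star, admits a lid-coloring using at most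
`2 ω(G) - 1` colors. -/
theorem stmt11 {V : Type*} [Fintype V] (G : SimpleGraph V) (hsplit : IsSplit G)
    (h : 3 ≤ G.cliqueNum ∨ IsStar G) :
    LidColorable G (2 * G.cliqueNum - 1) := by
  rcases h with h3 | hstar
  · obtain ⟨K, hKc, hInd, hcard⟩ := exists_good_partition G hsplit
    rw [← hcard]
    exact main_case G K hKc hInd hcard (by omega)
  · exact star_case G hstar
end

section
/- For every integer k ≥ 1, the graph obtained from a complete graph on k vertices by attaching to each of its k vertices one new pendant vertex (a new vertex of degree one adjacent only to that vertex) satisfies χ_lid(G) ≥ 2k − 1. -/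
open SimpleGraph

/-- The graph obtained from a complete graph on `k` vertices by attaching one new pendant
vertex to each clique vertex: `Sum.inl i` are the clique vertices, `Sum.inr i` is the
pendant vertex attached to `Sum.inl i`. -/
def cliquePlusPendants (k : ℕ) : SimpleGraph (Fin k ⊕ Fin k) :=
  SimpleGraph.fromRel (fun a b =>
    match a, b with
    | Sum.inl _, Sum.inl _ => True
    | Sum.inl i, Sum.inr j => i = j
    | _, _ => False)

/-- For every `k ≥ 1`, every lid-coloring of the complete graph on `k` vertices with a
pendant vertex attached to each clique vertex uses at least `2k - 1` colors. -/
theorem stmt12 (k : ℕ) (hk : 1 ≤ k) {α : Type*} (c : Fin k ⊕ Fin k → α)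
    (hc : IsLidColoring (cliquePlusPendants k) c) :
    2 * k - 1 ≤ (Set.range c).ncard := by

  classical
  set G := cliquePlusPendants k with hG
  have hadj_ll : ∀ i j : Fin k, G.Adj (Sum.inl i) (Sum.inl j) ↔ i ≠ j := by
    intro i j
    simp [hG, cliquePlusPendants, SimpleGraph.fromRel_adj]
  have hadj_lr : ∀ i j : Fin k, G.Adj (Sum.inl i) (Sum.inr j) ↔ i = j := by
    intro i j
    constructor
    · intro h
      rcases h.2 with h' | h'
      · exact h'
      · exact absurd h' (by simp)
    · intro h
      exact ⟨by simp, Or.inl h⟩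
  have hnbhd : ∀ i : Fin k, closedNbhd G (Sum.inl i)
      = insert (Sum.inr i) (Set.range Sum.inl) := by
    intro i
    ext x
    cases x with
    | inl j =>
      simp only [closedNbhd, Set.mem_insert_iff, SimpleGraph.mem_neighborSet,
        hadj_ll, Set.mem_range]
      constructor
      · intro _; right; exact ⟨j, rfl⟩
      · intro _
        by_cases h : i = j
        · left; exact congrArg Sum.inl h.symm
        · right; exact h
    | inr j =>
      simp only [closedNbhd, Set.mem_insert_iff, SimpleGraph.mem_neighborSet,
        hadj_lr, Set.mem_range]
      constructor
      · rintro (h | h)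
        · exact absurd h (by simp)
        · left; exact congrArg Sum.inr h.symm
      · rintro (h | ⟨y, h⟩)
        · right; exact (Sum.inr_injective h).symm
        · exact absurd h (by simp)
  set C : Set α := c '' Set.range Sum.inl with hC
  have himg : ∀ i : Fin k, c '' closedNbhd G (Sum.inl i) = insert (c (Sum.inr i)) C := by
    intro i; rw [hnbhd, Set.image_insert_eq]
  have key : ∀ i j : Fin k, i ≠ j →
      insert (c (Sum.inr i)) C ≠ insert (c (Sum.inr j)) C := by
    intro i j hij
    have hadj : G.Adj (Sum.inl i) (Sum.inl j) := (hadj_ll i j).2 hij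
    have hne : closedNbhd G (Sum.inl i) ≠ closedNbhd G (Sum.inl j) := by
      rw [hnbhd, hnbhd]
      intro h
      have hmem : (Sum.inr i : Fin k ⊕ Fin k) ∈
          insert (Sum.inr j) (Set.range Sum.inl) := h ▸ Set.mem_insert _ _
      rcases hmem with h' | ⟨y, h'⟩
      · exact hij (Sum.inr_injective h')
      · exact absurd h' (by simp)
    have := hc.2 hadj hne
    rw [himg, himg] at this
    exact this
  have hCfin : C.Finite := (Set.finite_range _).image _
  have hCcard : C.ncard = k := by
    have hinj : Set.InjOn c (Set.range Sum.inl) := by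
      rintro _ ⟨i, rfl⟩ _ ⟨j, rfl⟩ h
      by_contra hne
      have hij : i ≠ j := fun h' => hne (by rw [h'])
      exact hc.1 ((hadj_ll i j).2 hij) h
    rw [hC, Set.ncard_image_of_injOn hinj, ← Nat.card_coe_set_eq,
      Nat.card_range_of_injective Sum.inl_injective, Nat.card_eq_fintype_card,
      Fintype.card_fin]
  set D : Set (Fin k) := {i : Fin k | c (Sum.inr i) ∉ C} with hD
  have hDinj : Set.InjOn (fun i => c (Sum.inr i)) D := by
    intro i _ j _ h
    by_contra hij
    apply key i j hij
    simp only at h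
    rw [h]
  have hBad : Dᶜ.Subsingleton := by
    intro i hi j hj
    simp only [hD, Set.mem_compl_iff, Set.mem_setOf_eq, not_not] at hi hj
    by_contra hij
    apply key i j hij
    rw [Set.insert_eq_self.2 hi, Set.insert_eq_self.2 hj]
  have hDcard : k - 1 ≤ D.ncard := by
    have h1 : Dᶜ.ncard ≤ 1 := (Set.ncard_le_one (Set.toFinite _)).2 (fun _ ha _ hb => hBad ha hb)
    have h2 : D.ncard + Dᶜ.ncard = k := by
      rw [Set.ncard_add_ncard_compl, Nat.card_eq_fintype_card, Fintype.card_fin]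
    omega
  have hsub : C ∪ (fun i => c (Sum.inr i)) '' D ⊆ Set.range c := by
    rintro x (⟨y, _, rfl⟩ | ⟨i, _, rfl⟩) <;> exact ⟨_, rfl⟩
  have hdisj : Disjoint C ((fun i => c (Sum.inr i)) '' D) := by
    rw [Set.disjoint_right]
    rintro x ⟨i, hi, rfl⟩
    exact hi
  have himgfin : ((fun i => c (Sum.inr i)) '' D).Finite := (Set.toFinite D).image _
  calc 2 * k - 1 ≤ C.ncard + ((fun i => c (Sum.inr i)) '' D).ncard := by
        rw [Set.ncard_image_of_injOn hDinj, hCcard]; omega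
    _ = (C ∪ (fun i => c (Sum.inr i)) '' D).ncard :=
        (Set.ncard_union_eq hdisj hCfin himgfin).symm
    _ ≤ (Set.range c).ncard := Set.ncard_le_ncard hsub (Set.finite_range c)
end
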